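/- arXiv:2601.00972 — 6 statements merged into one kernel-verified Lean document; each statement's English description precedes it below -/
import Mathlib

section
/- Let L ≥ 3 and let D be a set of vertices of the planar surface code lattice disjoint from the boundary set B (D ⊆ V∖B). Let J ∈ F₂^{E} have minimum Hamming weight subject to ∂₁ J = 𝟙_D (such J always exists). Then there exists a 2-chain c ∈ F₂^{P} such that J' = J + ∂₂ c satisfies: the Hamming weight of J' equals that of J, ∂₁ J' = 𝟙_D, and every vertex of D is an endpoint of exactly one edge in the support of J'. In particular, there is a minimum-weight solution of ∂₁ J = 𝟙_D in which every vertex of D is incident to exactly one edge of the support of J. -/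
/-- Edge indices of the planar surface code lattice: `Sum.inl (r, c)` is the horizontal
edge joining `(r, c)` and `(r, c+1)` (for `0 ≤ r ≤ L-1`, `0 ≤ c ≤ L-1`); `Sum.inr (r, k)`
is the vertical edge joining `(r, k+1)` and `(r+1, k+1)` (for `0 ≤ r ≤ L-2`,
`1 ≤ k+1 ≤ L-1`).  In total there are `L² + (L-1)² = 2L² - 2L + 1` edges. -/
abbrev SE (L : ℕ) := (Fin L × Fin L) ⊕ (Fin (L - 1) × Fin (L - 1))

/-- Plaquette indices: plaquette `(r, c)` (for `0 ≤ r ≤ L-2`, `0 ≤ c ≤ L-1`) is the unit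
cell with corners `(r,c), (r,c+1), (r+1,c), (r+1,c+1)`. -/
abbrev SP (L : ℕ) := Fin (L - 1) × Fin L

/-- Interior (non-boundary) vertices `V ∖ B`: the pair `(r, k)` stands for the vertex
`(r, k+1)`, i.e. the vertices in columns `1, …, L-1`. -/
abbrev SV (L : ℕ) := Fin L × Fin (L - 1)

/-- Edge–plaquette incidence matrix over `F₂`: the boundary of a plaquette consists of
its (at most four) sides that belong to the edge set. -/
def sM2 (L : ℕ) : Matrix (SE L) (SP L) (ZMod 2) := fun e q =>
  match e with
  | Sum.inl rc =>
      if (rc.1.val = q.1.val ∨ rc.1.val = q.1.val + 1) ∧ rc.2.val = q.2.val then 1 else 0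
  | Sum.inr rk =>
      if rk.1.val = q.1.val ∧ (rk.2.val = q.2.val ∨ rk.2.val + 1 = q.2.val) then 1 else 0

/-- Interior-vertex–edge incidence matrix over `F₂` (a vertex of `B` contributes
nothing: this is the relative incidence). -/
def sM1 (L : ℕ) : Matrix (SV L) (SE L) (ZMod 2) := fun v e =>
  match e with
  | Sum.inl rc =>
      if rc.1.val = v.1.val ∧ (rc.2.val = v.2.val ∨ rc.2.val = v.2.val + 1) then 1 else 0
  | Sum.inr rk =>
      if rk.2.val = v.2.val ∧ (rk.1.val = v.1.val ∨ rk.1.val + 1 = v.1.val) then 1 else 0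

/-- The boundary map `∂₂ : F₂^{P} → F₂^{E}`, sending the indicator of a plaquette to the
sum of the indicators of its boundary edges in `E`. -/
def sD2 (L : ℕ) : (SP L → ZMod 2) →ₗ[ZMod 2] (SE L → ZMod 2) := (sM2 L).mulVecLin

/-- The relative boundary map `∂₁ : F₂^{E} → F₂^{V∖B}`, sending the indicator of an edge
to the sum of the indicators of its endpoints lying outside `B`. -/
def sD1 (L : ℕ) : (SE L → ZMod 2) →ₗ[ZMod 2] (SV L → ZMod 2) := (sM1 L).mulVecLin

/-- The transpose `∂₁^* : F₂^{E} → F₂^{P}` of `∂₂`. -/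
def sD1s (L : ℕ) : (SE L → ZMod 2) →ₗ[ZMod 2] (SP L → ZMod 2) :=
  (Matrix.transpose (sM2 L)).mulVecLin

/-- The transpose `∂₂^* : F₂^{V∖B} → F₂^{E}` of `∂₁`. -/
def sD2s (L : ℕ) : (SV L → ZMod 2) →ₗ[ZMod 2] (SE L → ZMod 2) :=
  (Matrix.transpose (sM1 L)).mulVecLin

/-- Hamming weight of an `F₂`-vector. -/
def wt {α : Type*} [Fintype α] (x : α → ZMod 2) : ℕ :=
  (Finset.univ.filter fun a => x a ≠ 0).card

/-- Indicator vector of a finite set of coordinates. -/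
def ind {α : Type*} [Fintype α] [DecidableEq α] (D : Finset α) : α → ZMod 2 :=
  fun a => if a ∈ D then 1 else 0

/-!
Among the chains `J + ∂₂ c` of weight at most `wt J` choose one of least `potential`, which
rewards vertical edges for lying far left in even rows and far right in odd rows. Flipping a
plaquette that carries two support edges never raises the weight (a plaquette has at most four
sides), and when these two edges are a horizontal side and the vertical side of larger drift it
lowers the potential. At any vertex, two incident edges of equal `edgeParity` form such a pair,
so at most two incident edges lie in the support; as `∂₁ J' = 𝟙_D`, a vertex of `D` has odd
degree, hence degree one.
-/

open Finset

theorem sM1_mul_sM2 (L : ℕ) : sM1 L * sM2 L = 0 := by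
  ext ⟨r, k⟩ ⟨a, c⟩
  rw [Matrix.mul_apply, Fintype.sum_sum_type, Fintype.sum_eq_single (r, c),
    Fintype.sum_eq_single (a, k)]
  · simp only [sM1, sM2, Matrix.zero_apply, true_and, and_true]
    split_ifs <;> first | omega | decide
  all_goals
    rintro ⟨x, y⟩ hxy
    simp only [ne_eq, Prod.mk.injEq, Fin.ext_iff] at hxy
    simp only [sM1, sM2]
    split_ifs <;> first | omega | simp

theorem sD1_sD2 (L : ℕ) (c : SP L → ZMod 2) : sD1 L (sD2 L c) = 0 := by
  simp [sD1, sD2, Matrix.mulVec_mulVec, sM1_mul_sM2]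

theorem zmod_two_ne_zero_iff_eq_one (a : ZMod 2) : a ≠ 0 ↔ a = 1 := by
  revert a
  decide

theorem cast_card_filter_ne_zero {α : Type*} (s : Finset α) (x : α → ZMod 2) :
    (#(s.filter (x · ≠ 0)) : ZMod 2) = ∑ a ∈ s, x a := by
  rw [← sum_filter_ne_zero, Finset.cast_card]
  exact sum_congr rfl fun a ha =>
    ((zmod_two_ne_zero_iff_eq_one _).mp (mem_filter.mp ha).2).symm

section SupportSum

variable {α : Type*} [Fintype α]

def supportSum (w : α → ℕ) (x : α → ZMod 2) : ℕ :=
  ∑ a ∈ univ.filter (x · ≠ 0), w a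

theorem wt_eq_supportSum (x : α → ZMod 2) : wt x = supportSum (fun _ => 1) x := by
  simp [wt, supportSum]

variable [DecidableEq α]

theorem supportSum_add_ind (w : α → ℕ) (x : α → ZMod 2) (S : Finset α) :
    supportSum w (x + ind S) + 2 * ∑ a ∈ S.filter (x · ≠ 0), w a =
      supportSum w x + ∑ a ∈ S, w a := by
  simp only [supportSum, sum_filter, mul_sum, ← Fintype.sum_ite_mem S, ← sum_add_distrib]
  refine sum_congr rfl fun a _ => ?_
  have hx : x a = 0 ∨ x a = 1 := or_iff_not_imp_left.mpr (zmod_two_ne_zero_iff_eq_one _).mp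
  have h11 : (1 : ZMod 2) + 1 = 0 := rfl
  by_cases ha : a ∈ S <;> rcases hx with hx | hx <;> simp [ind, ha, hx, h11, two_mul]

theorem supportSum_add_ind_add_le {w : α → ℕ} {x : α → ZMod 2} {S : Finset α} {a b : α}
    (hab : a ≠ b) (ha : a ∈ S) (hb : b ∈ S) (hxa : x a ≠ 0) (hxb : x b ≠ 0) :
    supportSum w (x + ind S) + 2 * (w a + w b) ≤ supportSum w x + ∑ e ∈ S, w e := by
  have hsub : {a, b} ⊆ S.filter (x · ≠ 0) := by
    simp [insert_subset_iff, ha, hb, hxa, hxb]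
  have := sum_le_sum_of_subset (f := w) hsub
  rw [sum_pair hab] at this
  have := supportSum_add_ind w x S
  omega

end SupportSum

def plaquetteBoundary (L : ℕ) (q : SP L) : Finset (SE L) :=
  univ.filter fun e => sM2 L e q = 1

theorem mem_plaquetteBoundary {L : ℕ} {q : SP L} {e : SE L} :
    e ∈ plaquetteBoundary L q ↔ sM2 L e q = 1 := by
  rw [plaquetteBoundary, mem_filter, and_iff_right (mem_univ e)]

theorem sD2_single (L : ℕ) (q : SP L) :
    sD2 L (Pi.single q 1) = ind (plaquetteBoundary L q) := by
  funext e
  change (sM2 L).mulVec (Pi.single q 1) e = _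
  rw [Matrix.mulVec_single_one]
  simp only [Matrix.col_apply, ind, mem_plaquetteBoundary]
  generalize sM2 L e q = t
  revert t
  decide

/-- A horizontal edge is located by its left endpoint, a vertical edge by its upper endpoint
(row, column). -/
def edgeCoord {L : ℕ} : SE L → (ℕ × ℕ) ⊕ (ℕ × ℕ) :=
  Sum.map (fun x => (x.1, x.2)) fun y => (y.1, y.2 + 1)

theorem edgeCoord_injective (L : ℕ) : Function.Injective (@edgeCoord L) := by
  refine Sum.map_injective.mpr ⟨?_, ?_⟩ <;>
    rintro ⟨a, b⟩ ⟨c, d⟩ h <;>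
    simp only [Prod.mk.injEq, Fin.val_inj, add_left_inj] at h <;>
    rw [h.1, h.2]

/-- Minimising `potential` pushes vertical edges left in even rows and right in odd rows. -/
def drift (L : ℕ) : (ℕ × ℕ) ⊕ (ℕ × ℕ) → ℕ :=
  Sum.elim (fun _ => 0) fun p => if Even p.1 then p.2 else L - p.2

def potential (L : ℕ) (x : SE L → ZMod 2) : ℕ :=
  supportSum (drift L ∘ edgeCoord) x

theorem image_edgeCoord_plaquetteBoundary_subset (L : ℕ) (q : SP L) :
    (plaquetteBoundary L q).image edgeCoord ⊆
      {.inl (q.1, q.2), .inl (q.1 + 1, q.2), .inr (q.1, q.2), .inr (q.1, q.2 + 1)} := by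
  intro p hp
  obtain ⟨e, he, rfl⟩ := mem_image.mp hp
  rw [mem_plaquetteBoundary] at he
  rcases e with ⟨r, k⟩ | ⟨r, k⟩ <;>
    simp only [sM2, ite_eq_left_iff, zero_ne_one, imp_false, not_not] at he <;>
    simp only [edgeCoord, Sum.map_inl, Sum.map_inr, mem_insert, mem_singleton, Sum.inl.injEq,
      Sum.inr.injEq, reduceCtorEq, Prod.mk.injEq, or_false, false_or] <;>
    omega

theorem card_plaquetteBoundary_le (L : ℕ) (q : SP L) : #(plaquetteBoundary L q) ≤ 4 := by
  rw [← card_image_of_injective _ (edgeCoord_injective L)]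
  exact (card_le_card (image_edgeCoord_plaquetteBoundary_subset L q)).trans card_le_four

theorem sum_drift_plaquetteBoundary_le (L : ℕ) (q : SP L) :
    ∑ e ∈ plaquetteBoundary L q, drift L (edgeCoord e) ≤
      drift L (.inr (q.1, q.2)) + drift L (.inr (q.1, q.2 + 1)) := by
  rw [← sum_image fun _ _ _ _ h => edgeCoord_injective L h]
  refine (sum_le_sum_of_subset (image_edgeCoord_plaquetteBoundary_subset L q)).trans ?_
  simp [drift]

/-- Two distinct edges at a common vertex with equal parity are a horizontal and a vertical
edge of one plaquette, the vertical one being its side of larger `drift`. -/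
def edgeParity {L : ℕ} : SE L → ℕ
  | .inl x => x.2 % 2
  | .inr y => (y.1 + y.2) % 2

theorem edgeParity_lt_two {L : ℕ} (e : SE L) : edgeParity e < 2 := by
  rcases e with x | y <;> exact Nat.mod_lt _ two_pos

theorem exists_plaquette_of_edgeParity_eq_inl_inr {L : ℕ} {v : SV L} {x : Fin L × Fin L}
    {y : Fin (L - 1) × Fin (L - 1)} (hx : sM1 L v (.inl x) = 1) (hy : sM1 L v (.inr y) = 1)
    (hpar : edgeParity (.inl x) = edgeParity (.inr y)) :
    ∃ q, .inl x ∈ plaquetteBoundary L q ∧ .inr y ∈ plaquetteBoundary L q ∧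
      ∑ e ∈ plaquetteBoundary L q, drift L (edgeCoord e) <
        2 * (drift L (edgeCoord (.inl x)) + drift L (edgeCoord (.inr y))) := by
  refine ⟨(y.1, x.2), ?_, ?_, (sum_drift_plaquetteBoundary_le L _).trans_lt ?_⟩ <;>
    simp only [sM1, ite_eq_left_iff, zero_ne_one, imp_false, not_not] at hx hy <;>
    simp only [edgeParity] at hpar
  · simp only [mem_plaquetteBoundary, sM2, and_true]
    exact if_pos (by omega)
  · simp only [mem_plaquetteBoundary, sM2, true_and]
    exact if_pos (by omega)
  · simp only [drift, edgeCoord, Sum.elim_inl, Sum.elim_inr, Sum.map_inl, Sum.map_inr,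
      Nat.even_iff]
    split_ifs <;> omega

theorem exists_plaquette_of_edgeParity_eq {L : ℕ} {v : SV L} {e₁ e₂ : SE L}
    (h₁ : sM1 L v e₁ = 1) (h₂ : sM1 L v e₂ = 1) (hne : e₁ ≠ e₂)
    (hpar : edgeParity e₁ = edgeParity e₂) :
    ∃ q, e₁ ∈ plaquetteBoundary L q ∧ e₂ ∈ plaquetteBoundary L q ∧
      ∑ e ∈ plaquetteBoundary L q, drift L (edgeCoord e) <
        2 * (drift L (edgeCoord e₁) + drift L (edgeCoord e₂)) := by
  rcases e₁ with x₁ | y₁ <;> rcases e₂ with x₂ | y₂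
  · exfalso
    simp only [sM1, ite_eq_left_iff, zero_ne_one, imp_false, not_not] at h₁ h₂
    simp only [edgeParity] at hpar
    simp only [ne_eq, Sum.inl.injEq, Prod.ext_iff, Fin.ext_iff] at hne
    omega
  · exact exists_plaquette_of_edgeParity_eq_inl_inr h₁ h₂ hpar
  · obtain ⟨q, hq₂, hq₁, hsum⟩ := exists_plaquette_of_edgeParity_eq_inl_inr h₂ h₁ hpar.symm
    exact ⟨q, hq₁, hq₂, by rwa [add_comm]⟩
  · exfalso
    simp only [sM1, ite_eq_left_iff, zero_ne_one, imp_false, not_not] at h₁ h₂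
    simp only [edgeParity] at hpar
    simp only [ne_eq, Sum.inr.injEq, Prod.ext_iff, Fin.ext_iff] at hne
    omega

def IsFlipStable (L : ℕ) (x : SE L → ZMod 2) : Prop :=
  ∀ q, wt (x + ind (plaquetteBoundary L q)) ≤ wt x →
    potential L x ≤ potential L (x + ind (plaquetteBoundary L q))

theorem exists_isFlipStable (L : ℕ) (J : SE L → ZMod 2) :
    ∃ c, wt (J + sD2 L c) ≤ wt J ∧ IsFlipStable L (J + sD2 L c) := by
  obtain ⟨c, hc, hmin⟩ := exists_min_image (univ.filter fun c => wt (J + sD2 L c) ≤ wt J)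
    (fun c => potential L (J + sD2 L c)) ⟨0, by simp⟩
  have hc := (mem_filter.mp hc).2
  refine ⟨c, hc, fun q hq => ?_⟩
  have hflip : J + sD2 L (c + Pi.single q 1) = J + sD2 L c + ind (plaquetteBoundary L q) := by
    rw [map_add, sD2_single, add_assoc]
  rw [← hflip] at hq ⊢
  exact hmin _ (mem_filter.mpr ⟨mem_univ _, hq.trans hc⟩)

theorem IsFlipStable.injOn_edgeParity {L : ℕ} {x : SE L → ZMod 2} (hx : IsFlipStable L x)
    (v : SV L) : Set.InjOn edgeParity {e | x e ≠ 0 ∧ sM1 L v e = 1} := by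
  intro e₁ h₁ e₂ h₂ hpar
  by_contra hne
  obtain ⟨q, hq₁, hq₂, hdrift⟩ := exists_plaquette_of_edgeParity_eq h₁.2 h₂.2 hne hpar
  have hwt := supportSum_add_ind_add_le (w := fun _ => 1) hne hq₁ hq₂ h₁.1 h₂.1
  have hpot := supportSum_add_ind_add_le (w := drift L ∘ edgeCoord) hne hq₁ hq₂ h₁.1 h₂.1
  have hcard := card_plaquetteBoundary_le L q
  simp only [sum_const, smul_eq_mul, mul_one, Function.comp_apply] at hwt hpot
  have := hx q (by rw [wt_eq_supportSum, wt_eq_supportSum]; omega)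
  rw [potential, potential] at this
  omega

theorem IsFlipStable.card_degree_le_two {L : ℕ} {x : SE L → ZMod 2} (hx : IsFlipStable L x)
    (v : SV L) : #(univ.filter fun e => x e ≠ 0 ∧ sM1 L v e = 1) ≤ 2 := by
  simpa using card_le_card_of_injOn edgeParity
    (fun e _ => mem_range.mpr (edgeParity_lt_two e)) (by simpa using hx.injOn_edgeParity v)

theorem cast_card_degree (L : ℕ) (x : SE L → ZMod 2) (v : SV L) :
    (#(univ.filter fun e => x e ≠ 0 ∧ sM1 L v e = 1) : ZMod 2) = sD1 L x v := by
  have hdeg : (univ.filter fun e => x e ≠ 0 ∧ sM1 L v e = 1) =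
      univ.filter fun e => sM1 L v e * x e ≠ 0 := by
    refine filter_congr fun e _ => ?_
    rw [mul_ne_zero_iff, and_comm, zmod_two_ne_zero_iff_eq_one (sM1 L v e)]
  rw [hdeg, cast_card_filter_ne_zero]
  rfl

theorem planar_degree3_defect_resolution_general
    (L : ℕ)
    (D : Finset (SV L))
    (J : SE L → ZMod 2)
    (hJ : sD1 L J = ind D)
    (hmin : ∀ K : SE L → ZMod 2, sD1 L K = ind D → wt J ≤ wt K) :
    ∃ c : SP L → ZMod 2,
      wt (J + sD2 L c) = wt J ∧
      sD1 L (J + sD2 L c) = ind D ∧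
      ∀ v ∈ D,
        (Finset.univ.filter
          (fun e : SE L => (J + sD2 L c) e ≠ 0 ∧ sM1 L v e = 1)).card = 1 := by
  obtain ⟨c, hwt, hstable⟩ := exists_isFlipStable L J
  have hbdry : sD1 L (J + sD2 L c) = ind D := by rw [map_add, hJ, sD1_sD2, add_zero]
  refine ⟨c, le_antisymm hwt (hmin _ hbdry), hbdry, fun v hv => ?_⟩
  have hodd : Odd #(univ.filter fun e => (J + sD2 L c) e ≠ 0 ∧ sM1 L v e = 1) := by
    rw [← ZMod.natCast_eq_one_iff_odd, cast_card_degree, hbdry, ind, if_pos hv]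
  have := hstable.card_degree_le_two v
  rw [Nat.odd_iff] at hodd
  omega

/-- **Dissolving degree-3 defects in the planar surface code.**
If `L ≥ 3`, `D ⊆ V∖B`, and `J` is a minimum Hamming-weight solution of `∂₁ J = 𝟙_D`,
then there is a `2`-chain `c` such that `J' = J + ∂₂ c` has the same weight, the same
relative boundary `𝟙_D`, and every vertex of `D` is an endpoint of exactly one edge of
the support of `J'`. -/
theorem planar_degree3_defect_resolution
    (L : ℕ) (hL : 3 ≤ L)
    (D : Finset (SV L))
    (J : SE L → ZMod 2)
    (hJ : sD1 L J = ind D)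
    (hmin : ∀ K : SE L → ZMod 2, sD1 L K = ind D → wt J ≤ wt K) :
    ∃ c : SP L → ZMod 2,
      wt (J + sD2 L c) = wt J ∧
      sD1 L (J + sD2 L c) = ind D ∧
      ∀ v ∈ D,
        (Finset.univ.filter
          (fun e : SE L => (J + sD2 L c) e ≠ 0 ∧ sM1 L v e = 1)).card = 1 :=
  planar_degree3_defect_resolution_general L D J hJ hmin
end

section
/- Let L ≥ 3, let p be a real number with 0 < p < 1, set n = 2L² and m = L², and let e ∈ F₂^{E_L}. Then Σ_{y ∈ im ∂₂} (1−p)^{n − wt(e+y)} p^{wt(e+y)} = 2^{−(n−m+1)} · Σ_{c ∈ ker ∂₁^*} (−1)^{⟨e,c⟩} (1−2p)^{wt(c)}. (The left-hand side is the probability of the stabilizer coset e + C_Z^⊥ of the toric code under the binary symmetric channel with crossover probability p, and the sum on the right runs over all dual cycles of the toric lattice.) -/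
/-- Vertices of the `L × L` toric lattice. -/
abbrev TV (L : ℕ) := ZMod L × ZMod L

/-- Edge indices of the toric lattice: `((i,j), 0)` joins `(i,j)` and `(i+1,j)`;
`((i,j), 1)` joins `(i,j)` and `(i,j+1)`. -/
abbrev TE (L : ℕ) := (ZMod L × ZMod L) × Fin 2

/-- Plaquette indices of the toric lattice. -/
abbrev TP (L : ℕ) := ZMod L × ZMod L

/-- First endpoint of an edge. -/
def tEp1 {L : ℕ} (e : TE L) : TV L := e.1

/-- Second endpoint of an edge. -/
def tEp2 {L : ℕ} (e : TE L) : TV L :=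
  if e.2 = 0 then (e.1.1 + 1, e.1.2) else (e.1.1, e.1.2 + 1)

/-- Vertex–edge incidence matrix over `F₂`. -/
def tM1 (L : ℕ) : Matrix (TV L) (TE L) (ZMod 2) := fun v e =>
  if v = tEp1 e ∨ v = tEp2 e then 1 else 0

/-- Edge–plaquette incidence matrix over `F₂`: the plaquette `(i,j)` has the four
boundary edges `((i,j),0)`, `((i,j),1)`, `((i,j+1),0)`, `((i+1,j),1)`. -/
def tM2 (L : ℕ) : Matrix (TE L) (TP L) (ZMod 2) := fun e q =>
  if e = ((q.1, q.2), (0 : Fin 2)) ∨ e = ((q.1, q.2), (1 : Fin 2)) ∨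
      e = ((q.1, q.2 + 1), (0 : Fin 2)) ∨ e = ((q.1 + 1, q.2), (1 : Fin 2))
  then 1 else 0

/-- The boundary map `∂₁ : F₂^{E_L} → F₂^{V_L}`, sending the indicator of an edge to
the sum of the indicators of its two endpoints. -/
def tD1 (L : ℕ) [NeZero L] : (TE L → ZMod 2) →ₗ[ZMod 2] (TV L → ZMod 2) :=
  (tM1 L).mulVecLin

/-- The boundary map `∂₂ : F₂^{P_L} → F₂^{E_L}`, sending the indicator of a plaquette to
the sum of the indicators of its four boundary edges. -/
def tD2 (L : ℕ) [NeZero L] : (TP L → ZMod 2) →ₗ[ZMod 2] (TE L → ZMod 2) :=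
  (tM2 L).mulVecLin

/-- The transpose `∂₁^* : F₂^{E_L} → F₂^{P_L}` of `∂₂`. -/
def tD1s (L : ℕ) [NeZero L] : (TE L → ZMod 2) →ₗ[ZMod 2] (TP L → ZMod 2) :=
  (Matrix.transpose (tM2 L)).mulVecLin

/-- The transpose `∂₂^* : F₂^{V_L} → F₂^{E_L}` of `∂₁`. -/
def tD2s (L : ℕ) [NeZero L] : (TV L → ZMod 2) →ₗ[ZMod 2] (TE L → ZMod 2) :=
  (Matrix.transpose (tM1 L)).mulVecLin

/-
The left side is a sum of the product measure `bscProb p` over the coset `e + im ∂₂`, and the right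
side is Poisson summation for it. The Walsh–Fourier transform of `bscProb p` is
`c ↦ (1 - 2p)^{wt c}`, because both the measure and the character `(-1)^{⟨x,c⟩}` factor over the
coordinates. Orthogonality of the characters of a subspace `W` turns the sum of a function over a
coset of `Wᗮ` into `|W|⁻¹` times the sum of its Fourier transform over `W`. Take `W = ker ∂₁^*`.
Then `Wᗮ = im ∂₂`, because `∂₁^*` is the transpose of `∂₂`. Also `|W| = 2^{L²+1}`: the kernel of
`∂₂` contains only the two constant plaquette vectors, so `∂₂` and its transpose both have
rank `L² - 1`.
-/

open Finset Matrix

lemma AddChar.map_sum_eq_prod {ι A M : Type*} [AddCommMonoid A] [CommMonoid M]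
    (ψ : AddChar A M) (s : Finset ι) (f : ι → A) :
    ψ (∑ i ∈ s, f i) = ∏ i ∈ s, ψ (f i) := by
  induction s using Finset.cons_induction with
  | empty => simp
  | cons i s hi ih => rw [sum_cons, prod_cons, AddChar.map_add_eq_mul, ih]

lemma ZMod.sum_univ_two {M : Type*} [AddCommMonoid M] (g : ZMod 2 → M) :
    ∑ b, g b = g 0 + g 1 :=
  Fin.sum_univ_two g

lemma ZMod.eq_one_of_ne_zero_two {z : ZMod 2} (hz : z ≠ 0) : z = 1 := by
  revert z; decide

lemma Fintype.sum_ite_eq_or_eq {α M : Type*} [Fintype α] [DecidableEq α] [AddCommMonoid M]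
    {a b : α} (hab : a ≠ b) (f : α → M) :
    ∑ q, (if q = a ∨ q = b then f q else 0) = f a + f b := by
  rw [← sum_filter, filter_or, filter_eq', filter_eq', if_pos (mem_univ _), if_pos (mem_univ _)]
  exact sum_pair hab

lemma ZMod.eq_apply_zero_of_periodic {n : ℕ} [NeZero n] {β : Type*} {f : ZMod n → β}
    (hf : Function.Periodic f 1) (j : ZMod n) : f j = f 0 := by
  simpa using hf.nat_mul_eq j.val

noncomputable def signChar : AddChar (ZMod 2) ℝ where
  toFun z := if z = 0 then 1 else -1
  map_zero_eq_one' := rfl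
  map_add_eq_mul' a b := by
    have h : a + b = 0 ↔ (a = 0 ↔ b = 0) := by revert a b; decide
    by_cases ha : a = 0 <;> by_cases hb : b = 0 <;> simp [ha, hb, h]

lemma signChar_apply (z : ZMod 2) : signChar z = if z = 0 then 1 else -1 := rfl

lemma signChar_eq_one_iff {z : ZMod 2} : signChar z = 1 ↔ z = 0 := by
  by_cases hz : z = 0 <;> norm_num [signChar_apply, hz]

section Fourier

variable {α : Type*} [Fintype α]

noncomputable def bscProb (p : ℝ) (x : α → ZMod 2) : ℝ := ∏ a, if x a = 0 then 1 - p else p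

lemma bscProb_eq (p : ℝ) (x : α → ZMod 2) :
    bscProb p x = (1 - p) ^ (Fintype.card α - wt x) * p ^ wt x := by
  have hzero : #{a | x a = 0} = Fintype.card α - wt x := by
    rw [wt, ← card_univ, ← card_filter_add_card_filter_not (s := univ) (fun a => x a = 0)]
    simp
  rw [bscProb, prod_ite, prod_const, prod_const, hzero, wt]

lemma sum_signChar_mul_bscProb [DecidableEq α] (p : ℝ) (c : α → ZMod 2) :
    ∑ x : α → ZMod 2, signChar (x ⬝ᵥ c) * bscProb p x = (1 - 2 * p) ^ wt c := by
  have hcoord : ∀ a, ∑ b : ZMod 2, signChar (b * c a) * (if b = 0 then 1 - p else p)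
      = if c a = 0 then 1 else 1 - 2 * p := by
    intro a
    rw [ZMod.sum_univ_two]
    by_cases h : c a = 0
    · simp [h]
    · simp [signChar_apply, ZMod.eq_one_of_ne_zero_two h]
      ring
  simp only [bscProb, dotProduct, AddChar.map_sum_eq_prod, ← prod_mul_distrib]
  rw [← Fintype.prod_sum (fun a b => signChar (b * c a) * (if b = 0 then 1 - p else p))]
  simp only [hcoord, prod_ite, prod_const_one, prod_const, one_mul, wt]

end Fourier

section Orthogonal

variable {K m n : Type*} [Field K] [Fintype m] [Fintype n]

variable (K n) in
abbrev dotProductForm : LinearMap.BilinForm K (n → K) := dotProductBilin K K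

lemma dotProductForm_nondegenerate : (dotProductForm K n).Nondegenerate :=
  ⟨fun x hx => dotProduct_eq_zero x hx,
    fun y hy => dotProduct_eq_zero y fun x => dotProduct_comm y x ▸ hy x⟩

lemma dotProductForm_isRefl : (dotProductForm K n).IsRefl :=
  fun x y h => by simpa [dotProduct_comm] using h

lemma orthogonal_range_mulVecLin (M : Matrix m n K) :
    (dotProductForm K m).orthogonal (LinearMap.range M.mulVecLin) = LinearMap.ker Mᵀ.mulVecLin := by
  ext v
  simp only [LinearMap.BilinForm.mem_orthogonal_iff, LinearMap.mem_range, forall_exists_index,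
    forall_apply_eq_imp_iff, LinearMap.mem_ker, dotProductBilin_apply_apply, mulVecLin_apply]
  have hadj : ∀ x, M *ᵥ x ⬝ᵥ v = Mᵀ *ᵥ v ⬝ᵥ x := fun x => by
    rw [dotProduct_comm, dotProduct_mulVec, mulVec_transpose]
  simp only [hadj, dotProduct_eq_zero_iff]

lemma range_mulVecLin_eq_orthogonal_ker (M : Matrix m n K) :
    LinearMap.range M.mulVecLin = (dotProductForm K m).orthogonal (LinearMap.ker Mᵀ.mulVecLin) := by
  rw [← orthogonal_range_mulVecLin, LinearMap.BilinForm.orthogonal_orthogonal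
    dotProductForm_nondegenerate dotProductForm_isRefl]

end Orthogonal

section Poisson

variable {α : Type*} [Fintype α] [DecidableEq α] (W : Submodule (ZMod 2) (α → ZMod 2))
  [DecidablePred (· ∈ W)] [DecidablePred (· ∈ (dotProductForm (ZMod 2) α).orthogonal W)]

lemma sum_signChar_dotProduct (x : α → ZMod 2) :
    ∑ c ∈ univ.filter (· ∈ W), signChar (x ⬝ᵥ c) =
      if x ∈ (dotProductForm (ZMod 2) α).orthogonal W then (Nat.card W : ℝ) else 0 := by
  let ψ : AddChar W ℝ := signChar.compAddMonoidHom
    ((dotProductBilin (ZMod 2) (ZMod 2) x).toAddMonoidHom.comp W.subtype.toAddMonoidHom)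
  have hψ : ψ = 0 ↔ x ∈ (dotProductForm (ZMod 2) α).orthogonal W := by
    simp [ψ, AddChar.eq_zero_iff, signChar_eq_one_iff, LinearMap.BilinForm.mem_orthogonal_iff,
      dotProduct_comm x]
  rw [Finset.sum_subtype (p := (· ∈ W)) _ (by simp)]
  change ∑ c, ψ c = _
  rw [AddChar.sum_eq_ite, Nat.card_eq_fintype_card]
  exact if_congr hψ rfl rfl

theorem sum_coset_orthogonal_eq (f : (α → ZMod 2) → ℝ) (e : α → ZMod 2) :
    ∑ y ∈ univ.filter (· ∈ (dotProductForm (ZMod 2) α).orthogonal W), f (e + y) =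
      (Nat.card W : ℝ)⁻¹ *
        ∑ c ∈ univ.filter (· ∈ W), signChar (e ⬝ᵥ c) * ∑ x, signChar (x ⬝ᵥ c) * f x := by
  have hW : (Nat.card W : ℝ) ≠ 0 := Nat.cast_ne_zero.2 Nat.card_pos.ne'
  rw [eq_inv_mul_iff_mul_eq₀ hW]
  symm
  calc ∑ c ∈ univ.filter (· ∈ W), signChar (e ⬝ᵥ c) * ∑ x, signChar (x ⬝ᵥ c) * f x
      = ∑ x, f x * ∑ c ∈ univ.filter (· ∈ W), signChar ((e + x) ⬝ᵥ c) := by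
        simp only [mul_sum, add_dotProduct, AddChar.map_add_eq_mul]
        rw [sum_comm]
        simp only [mul_comm, mul_left_comm]
    _ = ∑ x, if e + x ∈ (dotProductForm (ZMod 2) α).orthogonal W then Nat.card W * f x else 0 := by
        simp only [sum_signChar_dotProduct, mul_ite, mul_zero, mul_comm]
    _ = ∑ y, if y ∈ (dotProductForm (ZMod 2) α).orthogonal W then Nat.card W * f (e + y) else 0 :=
        Fintype.sum_equiv (Equiv.addLeft e) _ _ fun x => by
          simp [show e + (e + x) = x from funext fun a => CharTwo.add_cancel_left (e a) (x a)]
    _ = Nat.card W *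
          ∑ y ∈ univ.filter (· ∈ (dotProductForm (ZMod 2) α).orthogonal W), f (e + y) := by
        rw [sum_filter, mul_sum]
        simp only [mul_ite, mul_zero]

end Poisson

lemma range_tD2_eq_orthogonal_ker_tD1s (L : ℕ) [NeZero L] :
    LinearMap.range (tD2 L) =
      (dotProductForm (ZMod 2) (TE L)).orthogonal (LinearMap.ker (tD1s L)) :=
  range_mulVecLin_eq_orthogonal_ker (tM2 L)

section Toric

variable {L : ℕ} [NeZero L] [Fact (1 < L)]

lemma tD2_apply_zero (c : TP L → ZMod 2) (i j : ZMod L) :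
    tD2 L c ((i, j), 0) = c (i, j) + c (i, j - 1) := by
  have hne : ((i, j) : TP L) ≠ (i, j - 1) := by simp [eq_sub_iff_add_eq]
  rw [← Fintype.sum_ite_eq_or_eq hne]
  simp only [tD2, tM2, mulVecLin_apply, mulVec, dotProduct, ite_mul, one_mul, zero_mul]
  refine sum_congr rfl fun q _ => if_congr ?_ rfl rfl
  obtain ⟨q₁, q₂⟩ := q
  simp [eq_sub_iff_add_eq, eq_comm]

lemma tD2_apply_one (c : TP L → ZMod 2) (i j : ZMod L) :
    tD2 L c ((i, j), 1) = c (i, j) + c (i - 1, j) := by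
  have hne : ((i, j) : TP L) ≠ (i - 1, j) := by simp [eq_sub_iff_add_eq]
  rw [← Fintype.sum_ite_eq_or_eq hne]
  simp only [tD2, tM2, mulVecLin_apply, mulVec, dotProduct, ite_mul, one_mul, zero_mul]
  refine sum_congr rfl fun q _ => if_congr ?_ rfl rfl
  obtain ⟨q₁, q₂⟩ := q
  simp [eq_sub_iff_add_eq, eq_comm]

lemma ker_tD2 : LinearMap.ker (tD2 L) = Submodule.span (ZMod 2) {1} := by
  ext c
  rw [Submodule.mem_span_singleton, LinearMap.mem_ker]
  constructor
  · intro hc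
    have hrow : ∀ i, Function.Periodic (fun j => c (i, j)) 1 := fun i j => by
      simpa [tD2_apply_zero, CharTwo.add_eq_zero] using congrFun hc ((i, j + 1), 0)
    have hcol : Function.Periodic (fun i => c (i, 0)) 1 := fun i => by
      simpa [tD2_apply_one, CharTwo.add_eq_zero] using congrFun hc ((i + 1, 0), 1)
    refine ⟨c (0, 0), funext fun ⟨i, j⟩ => ?_⟩
    calc c (0, 0) • (1 : TP L → ZMod 2) (i, j) = c (0, 0) := by simp
      _ = c (i, 0) := (ZMod.eq_apply_zero_of_periodic hcol i).symm
      _ = c (i, j) := (ZMod.eq_apply_zero_of_periodic (hrow i) j).symm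
  · rintro ⟨a, rfl⟩
    ext ⟨⟨i, j⟩, d⟩
    fin_cases d <;> simp [tD2_apply_zero, tD2_apply_one, CharTwo.add_self_eq_zero]

lemma finrank_ker_tD1s : Module.finrank (ZMod 2) (LinearMap.ker (tD1s L)) = L ^ 2 + 1 := by
  have hker : Module.finrank (ZMod 2) (LinearMap.ker (tD2 L)) = 1 := by
    rw [ker_tD2]
    exact finrank_span_singleton one_ne_zero
  have hrank : Module.finrank (ZMod 2) (LinearMap.range (tD1s L)) =
      Module.finrank (ZMod 2) (LinearMap.range (tD2 L)) :=
    rank_transpose (tM2 L)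
  have h2 := LinearMap.finrank_range_add_finrank_ker (tD2 L)
  have h1 := LinearMap.finrank_range_add_finrank_ker (tD1s L)
  simp only [Module.finrank_fintype_fun_eq_card, Fintype.card_prod, ZMod.card, Fintype.card_fin]
    at h1 h2
  rw [sq]
  omega

lemma card_ker_tD1s : Nat.card (LinearMap.ker (tD1s L)) = 2 ^ (L ^ 2 + 1) := by
  rw [Module.natCard_eq_pow_finrank (K := ZMod 2), Nat.card_zmod, finrank_ker_tD1s]

end Toric

theorem toric_coset_probability_dual_cycle_expansion_general
    (L n m : ℕ) [NeZero L] (hL : 3 ≤ L)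
    (hn : n = 2 * L ^ 2) (hm : m = L ^ 2)
    (p : ℝ)
    (e : TE L → ZMod 2) :
    ∑ y ∈ Finset.univ.filter (fun y : TE L → ZMod 2 => ∃ c, tD2 L c = y),
        (1 - p) ^ (n - wt (e + y)) * p ^ wt (e + y)
    = (2 : ℝ) ^ (-((n : ℤ) - (m : ℤ) + 1)) *
        ∑ c ∈ Finset.univ.filter (fun c : TE L → ZMod 2 => tD1s L c = 0),
          (if (∑ a, e a * c a) = (0 : ZMod 2) then (1 : ℝ) else -1) *
            (1 - 2 * p) ^ wt c := by
  classical
  have : Fact (1 < L) := ⟨by omega⟩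
  have hcard : Fintype.card (TE L) = n := by simp [hn]; ring
  have hcoset : ∑ y ∈ univ.filter (fun y : TE L → ZMod 2 => ∃ c, tD2 L c = y),
      (1 - p) ^ (n - wt (e + y)) * p ^ wt (e + y) =
      ∑ y ∈ univ.filter (· ∈ (dotProductForm (ZMod 2) (TE L)).orthogonal (LinearMap.ker (tD1s L))),
        bscProb p (e + y) := by
    rw [← range_tD2_eq_orthogonal_ker_tD1s]
    exact sum_congr (by ext; simp) fun y _ => by rw [bscProb_eq, hcard]
  have hdual : ∑ c ∈ univ.filter (fun c : TE L → ZMod 2 => tD1s L c = 0),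
      (if (∑ a, e a * c a) = (0 : ZMod 2) then (1 : ℝ) else -1) * (1 - 2 * p) ^ wt c =
      ∑ c ∈ univ.filter (· ∈ LinearMap.ker (tD1s L)),
        signChar (e ⬝ᵥ c) * ∑ x, signChar (x ⬝ᵥ c) * bscProb p x :=
    sum_congr (by ext; simp) fun c _ => by rw [sum_signChar_mul_bscProb]; rfl
  have hnorm : (2 : ℝ) ^ (-((n : ℤ) - (m : ℤ) + 1)) =
      (Nat.card (LinearMap.ker (tD1s L)) : ℝ)⁻¹ := by
    have hexp : -((n : ℤ) - (m : ℤ) + 1) = -((L ^ 2 + 1 : ℕ) : ℤ) := by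
      subst hn hm; push_cast; ring
    rw [card_ker_tD1s, hexp, _root_.zpow_neg, zpow_natCast, Nat.cast_pow, Nat.cast_ofNat]
  rw [hcoset, hdual, hnorm, sum_coset_orthogonal_eq]

/-- **Kramers–Wannier–MacWilliams duality for the toric code.**
With `n = 2L²` qubits and `m = L²` plaquettes, the probability of the stabilizer coset
`e + C_Z^⊥ = e + im ∂₂` under the binary symmetric channel with crossover probability
`p` equals `2^{−(n−m+1)} Σ_{c ∈ ker ∂₁^*} (−1)^{⟨e,c⟩} (1−2p)^{wt c}`, the sum running
over all dual cycles of the toric lattice. -/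
theorem toric_coset_probability_dual_cycle_expansion
    (L n m : ℕ) [NeZero L] (hL : 3 ≤ L)
    (hn : n = 2 * L ^ 2) (hm : m = L ^ 2)
    (p : ℝ) (hp0 : 0 < p) (hp1 : p < 1)
    (e : TE L → ZMod 2) :
    ∑ y ∈ Finset.univ.filter (fun y : TE L → ZMod 2 => ∃ c, tD2 L c = y),
        (1 - p) ^ (n - wt (e + y)) * p ^ wt (e + y)
    = (2 : ℝ) ^ (-((n : ℤ) - (m : ℤ) + 1)) *
        ∑ c ∈ Finset.univ.filter (fun c : TE L → ZMod 2 => tD1s L c = 0),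
          (if (∑ a, e a * c a) = (0 : ZMod 2) then (1 : ℝ) else -1) *
            (1 - 2 * p) ^ wt c :=
  toric_coset_probability_dual_cycle_expansion_general L n m hL hn hm p e
end

section
/- Let L ≥ 3, let p be a real number with 0 < p < 1, set n = 2L² − 2L + 1 and m = m* = L(L−1), and let e_Z, e_X ∈ F₂^{E}. Then Σ_{y ∈ im ∂₂} Σ_{y' ∈ im ∂₂^*} (1−p)^{n − wt((e_Z+y) ∨ (e_X+y'))} (p/3)^{wt((e_Z+y) ∨ (e_X+y'))} = 2^{−(2n−m−m*)} · Σ_{c ∈ ker ∂₁^*} Σ_{c' ∈ ker ∂₁} (1 − 4p/3)^{wt(c ∨ c')} (−1)^{⟨e_Z,c⟩ + ⟨e_X,c'⟩}. (This expresses the probability under the depolarizing channel of the stabilizer coset (e_Z,e_X) + C_Z^⊥ × C_X^⊥ of the planar surface code as a jointly weighted sum over all pairs of a relative dual cycle and a relative primal cycle.) -/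
/-- Coordinatewise OR of two `F₂`-vectors (coordinatewise maximum, viewing
coordinates in `{0,1}`). -/
def orv {α : Type*} (x x' : α → ZMod 2) : α → ZMod 2 :=
  fun a => if x a = 0 ∧ x' a = 0 then 0 else 1

/-!
The coset probability is a sum of the product weight
`W(x, x') = ∏ₐ w(xₐ, x'ₐ)`, `w(0,0) = 1 - p`, `w = p/3` otherwise, over a translate of
`im ∂₂ × im ∂₂^*`. Poisson summation over `F₂`-column spaces, applied once in each
variable, turns such a sum into `2^{m-n} · 2^{m*-n}` times the sum of the Walsh–Hadamard
transform of `W` over the annihilators `ker ∂₁^* × ker ∂₁`, twisted by the characters of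
`(e_Z, e_X)`; here `2^m = |im ∂₂|` and `2^{m*} = |im ∂₂^*|` because both maps are injective
(each is triangular along the rows, resp. columns, of the lattice). Since `W` is a product
over qubits, its transform is the product of the one-qubit transforms, which equal `1`
at `(0,0)` and `1 - 4p/3` elsewhere; this gives `(1 - 4p/3)^{wt(c ∨ c')}`.
-/

open Finset Matrix

def sign₂ (t : ZMod 2) : ℝ := if t = 0 then 1 else -1

lemma zmod_two_eq_zero_or_eq_one (t : ZMod 2) : t = 0 ∨ t = 1 := by
  revert t; decide

@[simp] lemma sign₂_zero : sign₂ 0 = 1 := if_pos rfl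

@[simp] lemma sign₂_one : sign₂ 1 = -1 := if_neg one_ne_zero

lemma sign₂_add (s t : ZMod 2) : sign₂ (s + t) = sign₂ s * sign₂ t := by
  rcases zmod_two_eq_zero_or_eq_one s with rfl | rfl <;>
    rcases zmod_two_eq_zero_or_eq_one t with rfl | rfl <;>
    simp [show (1 + 1 : ZMod 2) = 0 from rfl]

lemma sign₂_sum {ι : Type*} (s : Finset ι) (f : ι → ZMod 2) :
    sign₂ (∑ i ∈ s, f i) = ∏ i ∈ s, sign₂ (f i) := by
  classical
  induction s using Finset.induction_on with
  | empty => simp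
  | insert i s hi ih => rw [sum_insert hi, prod_insert hi, sign₂_add, ih]

section Fourier

variable {α β : Type*} [Fintype α] [DecidableEq α] [Fintype β] [DecidableEq β]

def colSpace (N : Matrix α β (ZMod 2)) : Finset (α → ZMod 2) :=
  univ.filter fun y => ∃ u, N *ᵥ u = y

def colSpaceAnnihilator (N : Matrix α β (ZMod 2)) : Finset (α → ZMod 2) :=
  univ.filter fun c => Nᵀ *ᵥ c = 0

lemma card_colSpace_of_injective {N : Matrix α β (ZMod 2)} (hN : Function.Injective N.mulVec) :
    #(colSpace N) = 2 ^ Fintype.card β := by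
  have : colSpace N = univ.image N.mulVec := by ext; simp [colSpace]
  rw [this, card_image_of_injective _ hN, card_univ, Fintype.card_fun, ZMod.card]

lemma sum_colSpace_sign₂_dotProduct (N : Matrix α β (ZMod 2)) (c : α → ZMod 2) :
    ∑ y ∈ colSpace N, sign₂ (y ⬝ᵥ c) =
      if c ∈ colSpaceAnnihilator N then (#(colSpace N) : ℝ) else 0 := by
  have hdual (u : β → ZMod 2) : N *ᵥ u ⬝ᵥ c = u ⬝ᵥ Nᵀ *ᵥ c := by
    rw [mulVec_transpose, dotProduct_comm, dotProduct_mulVec, dotProduct_comm]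
  simp only [colSpaceAnnihilator, mem_filter, mem_univ, true_and]
  split_ifs with hc
  · rw [card_eq_sum_ones, Nat.cast_sum, Nat.cast_one]
    refine sum_congr rfl fun y hy => ?_
    obtain ⟨u, rfl⟩ := (mem_filter.1 hy).2
    rw [hdual, hc, dotProduct_zero, sign₂_zero]
  · -- translating by a codeword `y₀` with `y₀ ⬝ᵥ c = 1` negates every term
    obtain ⟨b, hb⟩ := Function.ne_iff.1 hc
    set y₀ := N *ᵥ Pi.single b 1
    have hy₀ : y₀ ⬝ᵥ c = 1 := by
      rw [hdual, single_one_dotProduct]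
      exact (zmod_two_eq_zero_or_eq_one _).resolve_left hb
    have hmem : ∀ y ∈ colSpace N, y + y₀ ∈ colSpace N := by
      intro y hy
      obtain ⟨u, rfl⟩ := (mem_filter.1 hy).2
      exact mem_filter.2 ⟨mem_univ _, u + Pi.single b 1, mulVec_add _ _ _⟩
    have hinv (y : α → ZMod 2) : y + y₀ + y₀ = y := by
      rw [add_assoc, ZModModule.add_self, add_zero]
    have hshift : ∑ y ∈ colSpace N, sign₂ (y ⬝ᵥ c) =
        ∑ y ∈ colSpace N, sign₂ ((y + y₀) ⬝ᵥ c) :=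
      sum_nbij' (· + y₀) (· + y₀) hmem hmem (fun y _ => hinv y) (fun y _ => hinv y)
        (fun y _ => by rw [hinv])
    simp only [add_dotProduct, sign₂_add, hy₀, sign₂_one, mul_neg_one, sum_neg_distrib]
      at hshift
    linarith

lemma sum_sign₂_dotProduct (z : α → ZMod 2) :
    ∑ c, sign₂ (z ⬝ᵥ c) = if z = 0 then (2 : ℝ) ^ Fintype.card α else 0 := by
  have hC : colSpace (1 : Matrix α α (ZMod 2)) = univ := by
    ext y; simp [colSpace]
  have h := sum_colSpace_sign₂_dotProduct (1 : Matrix α α (ZMod 2)) z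
  simp only [hC, colSpaceAnnihilator, transpose_one, one_mulVec, mem_filter, mem_univ,
    true_and, card_univ, Fintype.card_fun, ZMod.card, Nat.cast_pow, Nat.cast_ofNat] at h
  simpa only [dotProduct_comm z] using h

def hadamardTransform (f : (α → ZMod 2) → ℝ) (c : α → ZMod 2) : ℝ :=
  ∑ x, f x * sign₂ (x ⬝ᵥ c)

lemma sum_hadamardTransform_mul_sign₂ (f : (α → ZMod 2) → ℝ) (x : α → ZMod 2) :
    ∑ c, hadamardTransform f c * sign₂ (x ⬝ᵥ c) = 2 ^ Fintype.card α * f x := by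
  calc ∑ c, hadamardTransform f c * sign₂ (x ⬝ᵥ c)
      = ∑ y, f y * ∑ c, sign₂ ((y + x) ⬝ᵥ c) := by
        simp only [hadamardTransform, sum_mul, mul_sum, mul_assoc, add_dotProduct, sign₂_add]
        exact sum_comm
    _ = ∑ y, f y * if y = x then (2 : ℝ) ^ Fintype.card α else 0 := by
        simp only [sum_sign₂_dotProduct, ← ZModModule.sub_eq_add, sub_eq_zero]
    _ = 2 ^ Fintype.card α * f x := by simp [mul_comm]

/-- Poisson summation over the column space of `N`. -/
lemma sum_colSpace_add_eq (N : Matrix α β (ZMod 2)) (f : (α → ZMod 2) → ℝ)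
    (e : α → ZMod 2) :
    ∑ y ∈ colSpace N, f (e + y) = #(colSpace N) / 2 ^ Fintype.card α *
      ∑ c ∈ colSpaceAnnihilator N, hadamardTransform f c * sign₂ (e ⬝ᵥ c) := by
  have hinv (x : α → ZMod 2) :
      f x = (2 ^ Fintype.card α)⁻¹ * ∑ c, hadamardTransform f c * sign₂ (x ⬝ᵥ c) := by
    rw [sum_hadamardTransform_mul_sign₂, inv_mul_cancel_left₀ (by positivity)]
  calc ∑ y ∈ colSpace N, f (e + y)
      = (2 ^ Fintype.card α)⁻¹ * ∑ c, hadamardTransform f c * sign₂ (e ⬝ᵥ c) *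
          ∑ y ∈ colSpace N, sign₂ (y ⬝ᵥ c) := by
        simp only [hinv (e + _), add_dotProduct, sign₂_add, mul_sum, mul_assoc]
        exact sum_comm
    _ = #(colSpace N) / 2 ^ Fintype.card α *
          ∑ c ∈ colSpaceAnnihilator N, hadamardTransform f c * sign₂ (e ⬝ᵥ c) := by
        simp only [sum_colSpace_sign₂_dotProduct, mul_ite, mul_zero, sum_ite_mem, univ_inter]
        rw [← sum_mul, div_eq_inv_mul]; ring

variable {α' β' : Type*} [Fintype α'] [DecidableEq α'] [Fintype β'] [DecidableEq β']

def hadamardTransform₂ (F : (α → ZMod 2) → (α' → ZMod 2) → ℝ) (c : α → ZMod 2)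
    (c' : α' → ZMod 2) : ℝ :=
  hadamardTransform (fun x' => hadamardTransform (fun x => F x x') c) c'

lemma sum_colSpace_sum_colSpace_add_eq (N : Matrix α β (ZMod 2)) (N' : Matrix α' β' (ZMod 2))
    (F : (α → ZMod 2) → (α' → ZMod 2) → ℝ) (e : α → ZMod 2) (e' : α' → ZMod 2) :
    ∑ y ∈ colSpace N, ∑ y' ∈ colSpace N', F (e + y) (e' + y') =
      #(colSpace N) / 2 ^ Fintype.card α * (#(colSpace N') / 2 ^ Fintype.card α') *
        ∑ c ∈ colSpaceAnnihilator N, ∑ c' ∈ colSpaceAnnihilator N',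
          hadamardTransform₂ F c c' * (sign₂ (e ⬝ᵥ c) * sign₂ (e' ⬝ᵥ c')) := by
  set G : (α → ZMod 2) → (α' → ZMod 2) → ℝ := fun c x' => hadamardTransform (F · x') c
  calc ∑ y ∈ colSpace N, ∑ y' ∈ colSpace N', F (e + y) (e' + y')
      = ∑ y' ∈ colSpace N', #(colSpace N) / 2 ^ Fintype.card α *
          ∑ c ∈ colSpaceAnnihilator N, G c (e' + y') * sign₂ (e ⬝ᵥ c) :=
        sum_comm.trans (sum_congr rfl fun y' _ => sum_colSpace_add_eq N (F · (e' + y')) e)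
    _ = #(colSpace N) / 2 ^ Fintype.card α * ∑ c ∈ colSpaceAnnihilator N,
          (∑ y' ∈ colSpace N', G c (e' + y')) * sign₂ (e ⬝ᵥ c) := by
        rw [← mul_sum, sum_comm]
        simp only [sum_mul]
    _ = _ := by
        simp only [sum_colSpace_add_eq N' (G _), mul_sum, sum_mul, hadamardTransform₂, G]
        exact sum_congr rfl fun c _ => sum_congr rfl fun c' _ => by ring

end Fourier

section Weights

lemma orv_apply_eq_zero_iff {α : Type*} (x x' : α → ZMod 2) (a : α) :
    orv x x' a = 0 ↔ x a = 0 ∧ x' a = 0 := by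
  simp [orv]

noncomputable def depolarizingWeight (p : ℝ) (s t : ZMod 2) : ℝ :=
  if s = 0 ∧ t = 0 then 1 - p else p / 3

lemma sum_sum_depolarizingWeight_mul_sign₂ (p : ℝ) (u v : ZMod 2) :
    ∑ t, ∑ s, depolarizingWeight p s t * sign₂ (s * u) * sign₂ (t * v) =
      if u = 0 ∧ v = 0 then 1 else 1 - 4 * p / 3 := by
  have hsum (g : ZMod 2 → ℝ) : ∑ s, g s = g 0 + g 1 := Fin.sum_univ_two g
  simp only [hsum]
  rcases zmod_two_eq_zero_or_eq_one u with rfl | rfl <;>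
    rcases zmod_two_eq_zero_or_eq_one v with rfl | rfl <;>
    norm_num [depolarizingWeight] <;> ring

variable {α : Type*} [Fintype α]

lemma prod_ite_eq_zero_eq_pow_wt (q r : ℝ) (v : α → ZMod 2) :
    ∏ a, (if v a = 0 then q else r) = q ^ (Fintype.card α - wt v) * r ^ wt v := by
  rw [prod_ite, prod_const, prod_const, wt, ← card_univ,
    ← card_filter_add_card_filter_not (s := univ) (fun a => v a = 0), Nat.add_sub_cancel]

lemma prod_depolarizingWeight (p : ℝ) (x x' : α → ZMod 2) :
    ∏ a, depolarizingWeight p (x a) (x' a) =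
      (1 - p) ^ (Fintype.card α - wt (orv x x')) * (p / 3) ^ wt (orv x x') := by
  simp only [depolarizingWeight, ← orv_apply_eq_zero_iff, prod_ite_eq_zero_eq_pow_wt]

variable [DecidableEq α]

lemma hadamardTransform₂_prod (w : ZMod 2 → ZMod 2 → ℝ) (c c' : α → ZMod 2) :
    hadamardTransform₂ (fun x x' => ∏ a, w (x a) (x' a)) c c' =
      ∏ a, ∑ t, ∑ s, w s t * sign₂ (s * c a) * sign₂ (t * c' a) := by
  simp only [hadamardTransform₂, hadamardTransform, dotProduct, sign₂_sum, sum_mul,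
    ← prod_mul_distrib]
  rw [Fintype.prod_sum]
  refine sum_congr rfl fun x' _ => ?_
  rw [Fintype.prod_sum]

lemma hadamardTransform₂_depolarizing (p : ℝ) (c c' : α → ZMod 2) :
    hadamardTransform₂ (fun x x' => ∏ a, depolarizingWeight p (x a) (x' a)) c c' =
      (1 - 4 * p / 3) ^ wt (orv c c') := by
  simp only [hadamardTransform₂_prod, sum_sum_depolarizingWeight_mul_sign₂,
    ← orv_apply_eq_zero_iff, prod_ite_eq_zero_eq_pow_wt, one_pow, one_mul]

lemma sum_colSpace_sum_colSpace_depolarizing {β β' : Type*} [Fintype β] [DecidableEq β]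
    [Fintype β'] [DecidableEq β'] (N : Matrix α β (ZMod 2)) (N' : Matrix α β' (ZMod 2))
    (p : ℝ) (e e' : α → ZMod 2) :
    ∑ y ∈ colSpace N, ∑ y' ∈ colSpace N',
      (1 - p) ^ (Fintype.card α - wt (orv (e + y) (e' + y'))) *
        (p / 3) ^ wt (orv (e + y) (e' + y')) =
      #(colSpace N) / 2 ^ Fintype.card α * (#(colSpace N') / 2 ^ Fintype.card α) *
        ∑ c ∈ colSpaceAnnihilator N, ∑ c' ∈ colSpaceAnnihilator N',
          (1 - 4 * p / 3) ^ wt (orv c c') * (sign₂ (e ⬝ᵥ c) * sign₂ (e' ⬝ᵥ c')) := by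
  have h := sum_colSpace_sum_colSpace_add_eq N N'
    (fun x x' => ∏ a, depolarizingWeight p (x a) (x' a)) e e'
  simp only [hadamardTransform₂_depolarizing] at h
  simpa only [prod_depolarizingWeight] using h

end Weights

section Lattice

lemma eq_zero_of_forall_sum_adjacent_eq_zero {M : Type*} [AddCommMonoid M] {k : ℕ}
    (y : Fin k → M)
    (h : ∀ i < k, ∑ q : Fin k, (if i = q ∨ i = (q : ℕ) + 1 then y q else 0) = 0) :
    y = 0 := by
  funext ⟨j, hj⟩
  induction j using Nat.strong_induction_on with
  | _ j ih =>
    have hj' := h j hj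
    rwa [sum_eq_single ⟨j, hj⟩ (fun q _ hq => ?_) (by simp), if_pos (Or.inl rfl)] at hj'
    split_ifs with hjq
    · rcases hjq with hjq | hjq
      · exact absurd (Fin.ext hjq.symm) hq
      · exact ih q (by omega) q.isLt
    · rfl

lemma sM2_mulVec_inl (L : ℕ) (x : SP L → ZMod 2) (i c : Fin L) :
    (sM2 L *ᵥ x) (Sum.inl (i, c)) =
      ∑ q : Fin (L - 1), if (i : ℕ) = q ∨ (i : ℕ) = q + 1 then x (q, c) else 0 := by
  simp [mulVec, dotProduct, sM2, Fintype.sum_prod_type, ite_and, Fin.val_inj]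

lemma sM1_transpose_mulVec_inl (L : ℕ) (x : SV L → ZMod 2) (r c : Fin L) :
    ((sM1 L)ᵀ *ᵥ x) (Sum.inl (r, c)) =
      ∑ k : Fin (L - 1), if (c : ℕ) = k ∨ (c : ℕ) = k + 1 then x (r, k) else 0 := by
  simp [mulVec, dotProduct, sM1, Fintype.sum_prod_type, ite_and, Fin.val_inj]

lemma sM2_mulVec_injective (L : ℕ) : Function.Injective (sM2 L).mulVec := by
  rw [← coe_mulVecLin, injective_iff_map_eq_zero]
  intro x hx
  funext ⟨q, c⟩
  refine congrFun (eq_zero_of_forall_sum_adjacent_eq_zero (fun q => x (q, c)) fun i hi => ?_) q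
  rw [← sM2_mulVec_inl L x ⟨i, by omega⟩ c]
  exact congrFun hx _

lemma sM1_transpose_mulVec_injective (L : ℕ) : Function.Injective (sM1 L)ᵀ.mulVec := by
  rw [← coe_mulVecLin, injective_iff_map_eq_zero]
  intro x hx
  funext ⟨r, k⟩
  refine congrFun (eq_zero_of_forall_sum_adjacent_eq_zero (fun k => x (r, k)) fun c hc => ?_) k
  rw [← sM1_transpose_mulVec_inl L x r ⟨c, by omega⟩]
  exact congrFun hx _

lemma card_SE (L : ℕ) (hL : 1 ≤ L) : Fintype.card (SE L) = 2 * L ^ 2 - 2 * L + 1 := by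
  simp only [Fintype.card_sum, Fintype.card_prod, Fintype.card_fin]
  obtain ⟨l, rfl⟩ := Nat.exists_eq_add_of_le' hL
  simp only [Nat.add_sub_cancel]
  ring_nf
  omega

lemma card_colSpace_sM2 (L : ℕ) : #(colSpace (sM2 L)) = 2 ^ (L * (L - 1)) := by
  rw [card_colSpace_of_injective (sM2_mulVec_injective L)]
  simp [mul_comm]

lemma card_colSpace_sM1_transpose (L : ℕ) : #(colSpace (sM1 L)ᵀ) = 2 ^ (L * (L - 1)) := by
  rw [card_colSpace_of_injective (sM1_transpose_mulVec_injective L)]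
  simp

lemma filter_exists_sD2_eq (L : ℕ) :
    univ.filter (fun y : SE L → ZMod 2 => ∃ c, sD2 L c = y) = colSpace (sM2 L) := by
  ext; rw [colSpace, mem_filter, mem_filter]; rfl

lemma filter_exists_sD2s_eq (L : ℕ) :
    univ.filter (fun y : SE L → ZMod 2 => ∃ x, sD2s L x = y) = colSpace (sM1 L)ᵀ := by
  ext; rw [colSpace, mem_filter, mem_filter]; rfl

lemma filter_sD1s_eq_zero_eq (L : ℕ) :
    univ.filter (fun c : SE L → ZMod 2 => sD1s L c = 0) = colSpaceAnnihilator (sM2 L) := by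
  ext; rw [colSpaceAnnihilator, mem_filter, mem_filter]; rfl

lemma filter_sD1_eq_zero_eq (L : ℕ) :
    univ.filter (fun c : SE L → ZMod 2 => sD1 L c = 0) = colSpaceAnnihilator (sM1 L)ᵀ := by
  ext; rw [colSpaceAnnihilator, mem_filter, mem_filter]; rfl

end Lattice

theorem planar_coset_probability_depolarizing_dual_expansion_general
    (L n m mstar : ℕ) (hL : 3 ≤ L)
    (hn : n = 2 * L ^ 2 - 2 * L + 1) (hm : m = L * (L - 1)) (hms : mstar = L * (L - 1))
    (p : ℝ)
    (eZ eX : SE L → ZMod 2) :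
    ∑ y ∈ Finset.univ.filter (fun y : SE L → ZMod 2 => ∃ c, sD2 L c = y),
      ∑ y' ∈ Finset.univ.filter (fun y' : SE L → ZMod 2 => ∃ x, sD2s L x = y'),
        (1 - p) ^ (n - wt (orv (eZ + y) (eX + y'))) *
          (p / 3) ^ wt (orv (eZ + y) (eX + y'))
    = (2 : ℝ) ^ (-(2 * (n : ℤ) - (m : ℤ) - (mstar : ℤ))) *
        ∑ c ∈ Finset.univ.filter (fun c : SE L → ZMod 2 => sD1s L c = 0),
          ∑ c' ∈ Finset.univ.filter (fun c' : SE L → ZMod 2 => sD1 L c' = 0),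
            (1 - 4 * p / 3) ^ wt (orv c c') *
              (if (∑ a, eZ a * c a) + (∑ a, eX a * c' a) = (0 : ZMod 2)
               then (1 : ℝ) else -1) := by
  have hE : Fintype.card (SE L) = n := hn ▸ card_SE L (by omega)
  have hsign (c c' : SE L → ZMod 2) :
      (if (∑ a, eZ a * c a) + (∑ a, eX a * c' a) = (0 : ZMod 2) then (1 : ℝ) else -1) =
        sign₂ (eZ ⬝ᵥ c) * sign₂ (eX ⬝ᵥ c') := by
    rw [← sign₂_add]; rfl
  have hscale : (2 ^ m / 2 ^ n * (2 ^ mstar / 2 ^ n) : ℝ) =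
      2 ^ (-(2 * (n : ℤ) - (m : ℤ) - (mstar : ℤ))) := by
    rw [show -(2 * (n : ℤ) - m - mstar) = m + mstar - (n + n) by ring, zpow_sub₀ two_ne_zero,
      zpow_add₀ two_ne_zero, zpow_add₀ two_ne_zero]
    simp only [zpow_natCast]
    ring
  subst hE hm hms
  rw [filter_exists_sD2_eq, filter_exists_sD2s_eq, filter_sD1s_eq_zero_eq, filter_sD1_eq_zero_eq,
    sum_colSpace_sum_colSpace_depolarizing, card_colSpace_sM2, card_colSpace_sM1_transpose]
  simp only [Nat.cast_pow, Nat.cast_ofNat, hscale, hsign]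

/-- **Kramers–Wannier–MacWilliams duality for the planar surface code under
depolarizing noise.**  With `n = 2L² − 2L + 1` qubits and `m = m* = L(L−1)`, the
probability of the stabilizer coset
`(e_Z, e_X) + C_Z^⊥ × C_X^⊥ = (e_Z + im ∂₂) × (e_X + im ∂₂^*)` under the depolarizing
channel with parameter `p` equals
`2^{−(2n−m−m*)} Σ_{c ∈ ker ∂₁^*} Σ_{c' ∈ ker ∂₁} (1−4p/3)^{wt(c ∨ c')}
(−1)^{⟨e_Z,c⟩+⟨e_X,c'⟩}`, a jointly weighted sum over all pairs of a relative dual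
cycle and a relative primal cycle. -/
theorem planar_coset_probability_depolarizing_dual_expansion
    (L n m mstar : ℕ) (hL : 3 ≤ L)
    (hn : n = 2 * L ^ 2 - 2 * L + 1) (hm : m = L * (L - 1)) (hms : mstar = L * (L - 1))
    (p : ℝ) (hp0 : 0 < p) (hp1 : p < 1)
    (eZ eX : SE L → ZMod 2) :
    ∑ y ∈ Finset.univ.filter (fun y : SE L → ZMod 2 => ∃ c, sD2 L c = y),
      ∑ y' ∈ Finset.univ.filter (fun y' : SE L → ZMod 2 => ∃ x, sD2s L x = y'),
        (1 - p) ^ (n - wt (orv (eZ + y) (eX + y'))) *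
          (p / 3) ^ wt (orv (eZ + y) (eX + y'))
    = (2 : ℝ) ^ (-(2 * (n : ℤ) - (m : ℤ) - (mstar : ℤ))) *
        ∑ c ∈ Finset.univ.filter (fun c : SE L → ZMod 2 => sD1s L c = 0),
          ∑ c' ∈ Finset.univ.filter (fun c' : SE L → ZMod 2 => sD1 L c' = 0),
            (1 - 4 * p / 3) ^ wt (orv c c') *
              (if (∑ a, eZ a * c a) + (∑ a, eX a * c' a) = (0 : ZMod 2)
               then (1 : ℝ) else -1) :=
  planar_coset_probability_depolarizing_dual_expansion_general L n m mstar hL hn hm hms p eZ eX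
end

section
/- Let L ≥ 4 be even. Let φ : ZMod L → ZMod 2 be the natural ring homomorphism and let A = {(i,j) ∈ V_L : φ(i) + φ(j) = 0} be one of the two bipartition classes of the toric lattice graph. Let D be any set of vertices with A ⊆ D ⊆ V_L and |D| even. Then there exists J ∈ F₂^{E_L} with ∂₁ J = 𝟙_D whose Hamming weight equals L²/2. -/
open Finset

theorem mem_of_forall_single_sub_single_mem {R α : Type*} [Ring R] [Fintype α] [DecidableEq α]
    {S : Submodule R (α → R)} {s : Finset α} {b₀ : α}
    (hS : ∀ b ∈ s, Pi.single b 1 - Pi.single b₀ 1 ∈ S) {t : α → R}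
    (ht : ∀ a ∉ s, t a = 0) (hsum : ∑ a, t a = 0) : t ∈ S := by
  have hsum_s : ∑ b ∈ s, t b = 0 := by
    rwa [sum_subset (subset_univ s) fun a _ ha => ht a ha]
  have hexpand : t = ∑ b ∈ s, t b • (Pi.single b 1 - Pi.single b₀ 1) := by
    ext a
    by_cases ha : a ∈ s <;>
      simp [smul_sub, sum_sub_distrib, hsum_s, Pi.single_apply, ha, ht]
  rw [hexpand]
  exact sum_mem fun b hb => S.smul_mem _ (hS b hb)

theorem ind_eq_sum_single {α : Type*} [Fintype α] [DecidableEq α] (T : Finset α) :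
    ind T = ∑ x ∈ T, Pi.single x 1 := by
  ext a
  simp [ind, Finset.sum_apply, Pi.single_apply]

theorem wt_ind {α : Type*} [Fintype α] [DecidableEq α] (T : Finset α) :
    wt (ind T) = T.card := by
  simp [wt, ind]

theorem sum_ind {α : Type*} [Fintype α] [DecidableEq α] (T : Finset α) :
    ∑ a, ind T a = T.card := by
  simp [ind]

variable {L : ℕ}

theorem tEp1_ne_tEp2 [Fact (1 < L)] (e : TE L) : tEp1 e ≠ tEp2 e := by
  unfold tEp1 tEp2
  split_ifs <;> simp [Prod.ext_iff]

theorem tD1_single [NeZero L] [Fact (1 < L)] (e : TE L) :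
    tD1 L (Pi.single e 1) = Pi.single (tEp1 e) 1 + Pi.single (tEp2 e) 1 := by
  ext v
  have hne := tEp1_ne_tEp2 e
  simp only [tD1, Matrix.mulVecLin_apply, Matrix.mulVec_single_one, Matrix.col_apply, tM1,
    Pi.add_apply, Pi.single_apply]
  by_cases h1 : v = tEp1 e <;> by_cases h2 : v = tEp2 e <;> simp_all

theorem ZMod.ne_zero_iff_eq_one_of_two {x : ZMod 2} : x ≠ 0 ↔ x = 1 := by
  revert x; decide

section Parity

variable (hdvd : 2 ∣ L)

def torusParity (v : TV L) : ZMod 2 :=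
  ZMod.castHom hdvd (ZMod 2) v.1 + ZMod.castHom hdvd (ZMod 2) v.2

theorem torusParity_add_one_fst (v : TV L) :
    torusParity hdvd (v.1 + 1, v.2) = torusParity hdvd v + 1 := by
  simp only [torusParity, map_add, map_one]; ring

theorem torusParity_sub_one_fst (v : TV L) :
    torusParity hdvd (v.1 - 1, v.2) = torusParity hdvd v + 1 := by
  simp only [torusParity, map_sub, map_one, CharTwo.sub_eq_add]; ring

theorem torusParity_add_one_snd (v : TV L) :
    torusParity hdvd (v.1, v.2 + 1) = torusParity hdvd v + 1 := by
  simp only [torusParity, map_add, map_one]; ring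

theorem torusParity_sub_one_snd (v : TV L) :
    torusParity hdvd (v.1, v.2 - 1) = torusParity hdvd v + 1 := by
  simp only [torusParity, map_sub, map_one, CharTwo.sub_eq_add]; ring

variable [NeZero L]

def evenClass : Finset (TV L) := univ.filter fun v => torusParity hdvd v = 0

theorem mem_evenClass {v : TV L} : v ∈ evenClass hdvd ↔ torusParity hdvd v = 0 := by
  simp [evenClass]

theorem two_mul_card_evenClass : 2 * (evenClass hdvd).card = L ^ 2 := by
  have hshift :
      (evenClass hdvd).card = (univ.filter fun v => ¬ torusParity hdvd v = 0).card := by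
    refine card_nbij' (fun v => (v.1 + 1, v.2)) (fun v => (v.1 - 1, v.2)) ?_ ?_ ?_ ?_
    · intro v hv
      simp_all [evenClass, torusParity_add_one_fst]
    · intro v hv
      simp only [coe_filter, Set.mem_ofPred_eq, evenClass, mem_univ, true_and] at hv ⊢
      rw [torusParity_sub_one_fst, CharTwo.add_eq_zero]
      exact ZMod.ne_zero_iff_eq_one_of_two.1 hv
    · intro v _; simp
    · intro v _; simp
  have hsplit := card_filter_add_card_filter_not (s := (univ : Finset (TV L)))
    (fun v => torusParity hdvd v = 0)
  rw [card_univ, Fintype.card_prod, ZMod.card] at hsplit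
  rw [sq, ← hsplit, ← hshift, evenClass]
  ring

theorem card_evenClass : (evenClass hdvd).card = L ^ 2 / 2 := by
  rw [← two_mul_card_evenClass hdvd, Nat.mul_div_cancel_left _ two_pos]

end Parity

section Join

/-- Off column `0` both candidate edges of `a` lead to the next antidiagonal; in column `0`
the base edge points down instead, so that the links also join consecutive antidiagonals. -/
def baseEdge (a : TV L) : TE L := if a.1 = 0 then ((a.1, a.2 - 1), 1) else (a, 0)

def baseNbr (a : TV L) : TV L := if a.1 = 0 then (a.1, a.2 - 1) else (a.1 + 1, a.2)

def chosenEdge (c : TV L → ZMod 2) (a : TV L) : TE L := if c a = 0 then baseEdge a else (a, 1)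

def linkVec (a : TV L) : TV L → ZMod 2 := Pi.single (a.1, a.2 + 1) 1 - Pi.single (baseNbr a) 1

theorem tD1_single_baseEdge [NeZero L] [Fact (1 < L)] (a : TV L) :
    tD1 L (Pi.single (baseEdge a) 1) = Pi.single a 1 + Pi.single (baseNbr a) 1 := by
  rw [tD1_single]
  unfold baseEdge baseNbr
  split_ifs <;> simp [tEp1, tEp2, add_comm]

theorem tD1_single_chosenEdge [NeZero L] [Fact (1 < L)] (c : TV L → ZMod 2) (a : TV L) :
    tD1 L (Pi.single (chosenEdge c a) 1)
      = Pi.single a 1 + Pi.single (baseNbr a) 1 + c a • linkVec a := by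
  unfold chosenEdge
  by_cases h : c a = 0
  · simp [h, tD1_single_baseEdge]
  · rw [if_neg h, ZMod.ne_zero_iff_eq_one_of_two.1 h, one_smul, tD1_single, linkVec]
    simp only [tEp1, tEp2, if_neg one_ne_zero]
    abel

variable (hdvd : 2 ∣ L)

theorem torusParity_baseNbr (a : TV L) :
    torusParity hdvd (baseNbr a) = torusParity hdvd a + 1 := by
  unfold baseNbr
  split_ifs
  exacts [torusParity_sub_one_snd hdvd a, torusParity_add_one_fst hdvd a]

def evenEnd (e : TE L) : TV L := if torusParity hdvd (tEp1 e) = 0 then tEp1 e else tEp2 e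

variable [NeZero L]

theorem evenEnd_chosenEdge (c : TV L → ZMod 2) {a : TV L} (ha : a ∈ evenClass hdvd) :
    evenEnd hdvd (chosenEdge c a) = a := by
  rw [mem_evenClass] at ha
  have hdown : torusParity hdvd (tEp1 ((a.1, a.2 - 1), 1)) ≠ 0 := by
    simp [tEp1, torusParity_sub_one_snd, ha]
  unfold chosenEdge baseEdge
  split_ifs
  · rw [evenEnd, if_neg hdown]; simp [tEp2]
  all_goals simp [evenEnd, tEp1, ha]

theorem injOn_chosenEdge (c : TV L → ZMod 2) : Set.InjOn (chosenEdge c) (evenClass hdvd) :=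
  Set.LeftInvOn.injOn (f₁' := evenEnd hdvd) fun _ ha => evenEnd_chosenEdge hdvd c ha

def choiceJoin (c : TV L → ZMod 2) : TE L → ZMod 2 :=
  ind ((evenClass hdvd).image (chosenEdge c))

theorem wt_choiceJoin (c : TV L → ZMod 2) :
    wt (choiceJoin hdvd c) = (evenClass hdvd).card := by
  rw [choiceJoin, wt_ind, card_image_of_injOn (injOn_chosenEdge hdvd c)]

theorem tD1_choiceJoin [Fact (1 < L)] (c : TV L → ZMod 2) :
    tD1 L (choiceJoin hdvd c) = ind (evenClass hdvd)
      + ∑ a ∈ evenClass hdvd, Pi.single (baseNbr a) 1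
      + ∑ a ∈ evenClass hdvd, c a • linkVec a := by
  rw [choiceJoin, ind_eq_sum_single, sum_image (injOn_chosenEdge hdvd c), map_sum]
  simp only [tD1_single_chosenEdge, sum_add_distrib, ← ind_eq_sum_single]

end Join

section Linking

variable [NeZero L] (hdvd : 2 ∣ L)

def linkSpace : Submodule (ZMod 2) (TV L → ZMod 2) :=
  Submodule.span (ZMod 2) (linkVec '' ↑(evenClass hdvd))

theorem linkVec_mem_linkSpace {a : TV L} (ha : a ∈ evenClass hdvd) :
    linkVec a ∈ linkSpace hdvd :=
  Submodule.subset_span ⟨a, ha, rfl⟩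

theorem single_sub_single_mem_linkSpace_of_antidiagonal {c : ZMod L}
    (hc : ZMod.castHom hdvd (ZMod 2) c = 1) :
    ∀ n : ℕ, n < L →
      Pi.single (-(n : ZMod L), c + n) 1 - Pi.single (0, c) 1 ∈ linkSpace hdvd
  | 0, _ => by simp
  | n + 1, hn => by
    set a : TV L := (-((n + 1 : ℕ) : ZMod L), c + n)
    have ha : a ∈ evenClass hdvd := by
      rw [mem_evenClass, torusParity]
      simp only [a, map_neg, map_add, map_natCast, hc, CharTwo.neg_eq]
      push_cast
      ring_nf
      reduce_mod_char
    have hne : a.1 ≠ 0 := by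
      rw [neg_ne_zero, Ne, ZMod.natCast_eq_zero_iff]
      exact fun h => absurd (Nat.le_of_dvd n.succ_pos h) (by omega)
    have hlink : linkVec a
        = Pi.single (-((n + 1 : ℕ) : ZMod L), c + ((n + 1 : ℕ) : ZMod L)) 1
          - Pi.single (-(n : ZMod L), c + n) 1 := by
      have hup : ((a.1, a.2 + 1) : TV L)
          = (-((n + 1 : ℕ) : ZMod L), c + ((n + 1 : ℕ) : ZMod L)) :=
        Prod.ext rfl (by push_cast; ring)
      have hright : ((a.1 + 1, a.2) : TV L) = (-(n : ZMod L), c + n) :=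
        Prod.ext (by simp only [a]; push_cast; ring) rfl
      rw [linkVec, baseNbr, if_neg hne, hup, hright]
    have := add_mem (linkVec_mem_linkSpace hdvd ha)
      (single_sub_single_mem_linkSpace_of_antidiagonal hc n (by omega))
    rwa [hlink, sub_add_sub_cancel] at this

theorem single_sub_single_mem_linkSpace_of_column :
    ∀ m : ℕ, Pi.single ((0 : ZMod L), 1 + 2 * (m : ZMod L)) 1 - Pi.single (0, 1) 1
      ∈ linkSpace hdvd
  | 0 => by simp
  | m + 1 => by
    set a : TV L := (0, 2 * ((m : ZMod L) + 1))
    have ha : a ∈ evenClass hdvd := by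
      rw [mem_evenClass, torusParity, map_zero, map_mul, map_ofNat, zero_add]
      exact mul_eq_zero_of_left (by decide) _
    have hlink : linkVec a
        = Pi.single ((0 : ZMod L), 1 + 2 * ((m + 1 : ℕ) : ZMod L)) 1
          - Pi.single (0, 1 + 2 * (m : ZMod L)) 1 := by
      have hup : ((a.1, a.2 + 1) : TV L) = (0, 1 + 2 * ((m + 1 : ℕ) : ZMod L)) :=
        Prod.ext rfl (by push_cast; ring)
      have hdown : ((a.1, a.2 - 1) : TV L) = (0, 1 + 2 * (m : ZMod L)) :=
        Prod.ext rfl (by ring)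
      rw [linkVec, baseNbr, if_pos rfl, hup, hdown]
    have := add_mem (linkVec_mem_linkSpace hdvd ha)
      (single_sub_single_mem_linkSpace_of_column m)
    rwa [hlink, sub_add_sub_cancel] at this

theorem single_sub_single_mem_linkSpace {b : TV L} (hb : torusParity hdvd b = 1) :
    Pi.single b 1 - Pi.single (0, 1) 1 ∈ linkSpace hdvd := by
  obtain ⟨x, y⟩ := b
  have hc : ZMod.castHom hdvd (ZMod 2) (x + y) = 1 := by
    rw [map_add]; exact hb
  have hdiag := single_sub_single_mem_linkSpace_of_antidiagonal hdvd hc (-x).val (ZMod.val_lt _)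
  rw [ZMod.natCast_zmod_val, neg_neg, add_neg_cancel_comm] at hdiag
  obtain ⟨m, hm⟩ : Odd (x + y).val := by
    rw [← ZMod.natCast_eq_one_iff_odd, ← ZMod.cast_eq_val]
    rwa [ZMod.castHom_apply] at hc
  have hcol := single_sub_single_mem_linkSpace_of_column hdvd m
  have hxy : 1 + 2 * (m : ZMod L) = x + y := by
    rw [← ZMod.natCast_zmod_val (x + y), hm]; push_cast; ring
  rw [hxy] at hcol
  simpa using add_mem hdiag hcol

end Linking

theorem exists_sum_smul_linkVec_eq [NeZero L] (hdvd : 2 ∣ L) {D : Finset (TV L)}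
    (hA : evenClass hdvd ⊆ D) (hD : Even D.card) :
    ∃ c : TV L → ZMod 2, ∑ a ∈ evenClass hdvd, c a • linkVec a
      = ind D - ind (evenClass hdvd) - ∑ a ∈ evenClass hdvd, Pi.single (baseNbr a) 1 := by
  refine (Submodule.mem_span_image_finset_iff_exists_fun' (ZMod 2)).1 ?_
  refine mem_of_forall_single_sub_single_mem
    (s := univ.filter fun b => torusParity hdvd b = 1) (b₀ := (0, 1))
    (fun b hb => single_sub_single_mem_linkSpace hdvd (mem_filter.1 hb).2) ?_ ?_
  · intro v hv
    have hvA : v ∈ evenClass hdvd := by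
      simpa [mem_evenClass, ← ZMod.ne_zero_iff_eq_one_of_two] using hv
    have hnbr : ∀ a ∈ evenClass hdvd, v ≠ baseNbr a := by
      intro a ha hav
      rw [mem_evenClass] at ha hvA
      rw [hav, torusParity_baseNbr, ha] at hvA
      exact one_ne_zero hvA
    simp [ind, hA hvA, hvA, Finset.sum_apply, Pi.single_apply, filter_false_of_mem hnbr]
  · simp only [Pi.sub_apply, sum_sub_distrib, sum_ind, Finset.sum_apply]
    rw [sum_comm]
    simp only [Fintype.sum_pi_single', sum_const, nsmul_eq_mul, mul_one, hD.natCast_zmod_two]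
    rw [sub_sub, CharTwo.add_self_eq_zero, sub_zero]

theorem toric_bipartition_class_join_general
    (L : ℕ) [NeZero L] (hdvd : 2 ∣ L)
    (D : Finset (TV L))
    (hA : Finset.univ.filter
        (fun v : TV L =>
          ZMod.castHom hdvd (ZMod 2) v.1 + ZMod.castHom hdvd (ZMod 2) v.2 = 0) ⊆ D)
    (hD : Even D.card) :
    ∃ J : TE L → ZMod 2, tD1 L J = ind D ∧ wt J = L ^ 2 / 2 := by
  have : Fact (1 < L) := ⟨Nat.le_of_dvd (Nat.pos_of_ne_zero (NeZero.ne L)) hdvd⟩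
  obtain ⟨c, hc⟩ := exists_sum_smul_linkVec_eq hdvd hA hD
  refine ⟨choiceJoin hdvd c, ?_, by rw [wt_choiceJoin, card_evenClass]⟩
  rw [tD1_choiceJoin, hc]
  abel

/-- **Diamond defects admit a small join.**
Let `L ≥ 4` be even, let `A = {(i,j) : φ(i)+φ(j) = 0}` (with `φ : ZMod L → ZMod 2` the
natural ring homomorphism) be one of the two bipartition classes of the toric lattice
graph, and let `D` be any even-cardinality vertex set containing `A`.  Then there is a
`D`-join of Hamming weight exactly `L²/2`, i.e. some `J` with `∂₁ J = 𝟙_D` and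
`wt J = L²/2`. -/
theorem toric_bipartition_class_join
    (L : ℕ) [NeZero L] (hL : 4 ≤ L) (hdvd : 2 ∣ L)
    (D : Finset (TV L))
    (hA : Finset.univ.filter
        (fun v : TV L =>
          ZMod.castHom hdvd (ZMod 2) v.1 + ZMod.castHom hdvd (ZMod 2) v.2 = 0) ⊆ D)
    (hD : Even D.card) :
    ∃ J : TE L → ZMod 2, tD1 L J = ind D ∧ wt J = L ^ 2 / 2 :=
  toric_bipartition_class_join_general L hdvd D hA hD
end

section
/- For L ≥ 3, the kernel of the toric boundary map ∂₂ : F₂^{P_L} → F₂^{E_L} consists exactly of the zero vector and the all-ones vector. In particular, the rank of ∂₂ is L² − 1, i.e., the only linear dependency among the plaquette boundary vectors of the toric lattice is that their total sum is zero. -/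
lemma tD2_apply0 (L : ℕ) [NeZero L] (hL : 2 ≤ L) (c : TP L → ZMod 2) (i j : ZMod L) :
    tD2 L c ((i, j), (0 : Fin 2)) = c (i, j) + c (i, j - 1) := by
  haveI : Fact (1 < L) := ⟨hL⟩
  have hne : ((i, j) : TP L) ≠ (i, j - 1) := by
    intro h
    have h2 : j = j - 1 := congrArg Prod.snd h
    exact one_ne_zero (sub_eq_self.mp h2.symm)
  have step : ∀ q : TP L, tM2 L ((i, j), (0 : Fin 2)) q * c q
      = if q ∈ ({(i, j), (i, j - 1)} : Finset (TP L)) then c q else 0 := by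
    rintro ⟨a, b⟩
    rw [tM2]
    simp only [Finset.mem_insert, Finset.mem_singleton, ite_mul, one_mul, zero_mul]
    congr 1
    simp only [Prod.mk.injEq, Fin.ext_iff, eq_iff_iff]
    constructor
    · rintro (⟨⟨h1, h2⟩, _⟩ | ⟨_, h⟩ | ⟨⟨h1, h2⟩, _⟩ | ⟨_, h⟩)
      · exact Or.inl (by simp [h1, h2])
      · simp at h
      · exact Or.inr (by simp [h1, eq_sub_of_add_eq h2.symm])
      · simp at h
    · rintro (⟨h1, h2⟩ | ⟨h1, h2⟩)
      · exact Or.inl ⟨⟨h1.symm, h2.symm⟩, trivial⟩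
      · exact Or.inr (Or.inr (Or.inl ⟨⟨h1.symm, by rw [h2]; ring⟩, trivial⟩))
  calc tD2 L c ((i, j), (0 : Fin 2)) = ∑ q, tM2 L ((i, j), (0 : Fin 2)) q * c q := rfl
    _ = ∑ q, if q ∈ ({(i, j), (i, j - 1)} : Finset (TP L)) then c q else 0 := by
        simp_rw [step]
    _ = ∑ q ∈ ({(i, j), (i, j - 1)} : Finset (TP L)), c q := by
        rw [Finset.sum_ite_mem, Finset.univ_inter]
    _ = c (i, j) + c (i, j - 1) := Finset.sum_pair hne

lemma tD2_apply1 (L : ℕ) [NeZero L] (hL : 2 ≤ L) (c : TP L → ZMod 2) (i j : ZMod L) :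
    tD2 L c ((i, j), (1 : Fin 2)) = c (i, j) + c (i - 1, j) := by
  haveI : Fact (1 < L) := ⟨hL⟩
  have hne : ((i, j) : TP L) ≠ (i - 1, j) := by
    intro h
    have h2 : i = i - 1 := congrArg Prod.fst h
    exact one_ne_zero (sub_eq_self.mp h2.symm)
  have step : ∀ q : TP L, tM2 L ((i, j), (1 : Fin 2)) q * c q
      = if q ∈ ({(i, j), (i - 1, j)} : Finset (TP L)) then c q else 0 := by
    rintro ⟨a, b⟩
    rw [tM2]
    simp only [Finset.mem_insert, Finset.mem_singleton, ite_mul, one_mul, zero_mul]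
    congr 1
    simp only [Prod.mk.injEq, Fin.ext_iff, eq_iff_iff]
    constructor
    · rintro (⟨_, h⟩ | ⟨⟨h1, h2⟩, _⟩ | ⟨_, h⟩ | ⟨⟨h1, h2⟩, _⟩)
      · simp at h
      · exact Or.inl (by simp [h1, h2])
      · simp at h
      · exact Or.inr (by simp [h2, eq_sub_of_add_eq h1.symm])
    · rintro (⟨h1, h2⟩ | ⟨h1, h2⟩)
      · exact Or.inr (Or.inl ⟨⟨h1.symm, h2.symm⟩, trivial⟩)
      · exact Or.inr (Or.inr (Or.inr ⟨⟨by rw [h1]; ring, h2.symm⟩, trivial⟩))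
  calc tD2 L c ((i, j), (1 : Fin 2)) = ∑ q, tM2 L ((i, j), (1 : Fin 2)) q * c q := rfl
    _ = ∑ q, if q ∈ ({(i, j), (i - 1, j)} : Finset (TP L)) then c q else 0 := by
        simp_rw [step]
    _ = ∑ q ∈ ({(i, j), (i - 1, j)} : Finset (TP L)), c q := by
        rw [Finset.sum_ite_mem, Finset.univ_inter]
    _ = c (i, j) + c (i - 1, j) := Finset.sum_pair hne

/-- **Kernel of the toric `∂₂`.**
For `L ≥ 3`, the kernel of `∂₂ : F₂^{P_L} → F₂^{E_L}` consists exactly of the zero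
vector and the all-ones vector; in particular the rank of `∂₂` is `L² − 1`. -/
theorem toric_d2_kernel
    (L : ℕ) [NeZero L] (hL : 3 ≤ L) :
    (∀ c : TP L → ZMod 2, tD2 L c = 0 ↔ (c = fun _ => 0) ∨ (c = fun _ => 1)) ∧
    Module.finrank (ZMod 2) ↥(LinearMap.range (tD2 L)) = L ^ 2 - 1 := by
  have hL2 : 2 ≤ L := by omega
  have hsum : ∀ a b : ZMod 2, a + b = 0 → a = b := by decide
  have hker : ∀ c : TP L → ZMod 2, tD2 L c = 0 ↔ (c = fun _ => 0) ∨ (c = fun _ => 1) := by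
    intro c
    constructor
    · intro h
      have hrow : ∀ i j : ZMod L, c (i, j + 1) = c (i, j) := by
        intro i j
        have hz : c (i, j + 1) + c (i, j + 1 - 1) = 0 := by
          rw [← tD2_apply0 L hL2 c i (j + 1)]; exact congrFun h _
        have := hsum _ _ hz
        simpa using this
      have hcol : ∀ i j : ZMod L, c (i + 1, j) = c (i, j) := by
        intro i j
        have hz : c (i + 1, j) + c (i + 1 - 1, j) = 0 := by
          rw [← tD2_apply1 L hL2 c (i + 1) j]; exact congrFun h _
        have := hsum _ _ hz
        simpa using this
      have hconst : ∀ p : TP L, c p = c (0, 0) := by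
        have h0 : ∀ m : ℕ, c (0, (m : ZMod L)) = c (0, 0) := by
          intro m
          induction m with
          | zero => simp
          | succ n ih => rw [show ((n + 1 : ℕ) : ZMod L) = (n : ZMod L) + 1 by push_cast; ring,
              hrow, ih]
        have h1 : ∀ n : ℕ, ∀ b : ZMod L, c ((n : ZMod L), b) = c (0, b) := by
          intro n
          induction n with
          | zero => simp
          | succ m ih => intro b
                         rw [show ((m + 1 : ℕ) : ZMod L) = (m : ZMod L) + 1 by push_cast; ring,
                           hcol, ih]
        rintro ⟨a, b⟩
        obtain ⟨n, rfl⟩ := ZMod.natCast_zmod_surjective a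
        obtain ⟨m, rfl⟩ := ZMod.natCast_zmod_surjective b
        rw [h1, h0]
      have htwo : ∀ a : ZMod 2, a = 0 ∨ a = 1 := by decide
      have : c (0, 0) = 0 ∨ c (0, 0) = 1 := htwo _
      rcases this with h0 | h0
      · exact Or.inl (funext fun p => (hconst p).trans h0)
      · exact Or.inr (funext fun p => (hconst p).trans h0)
    · rintro (rfl | rfl)
      · exact map_zero _
      · funext e
        rcases e with ⟨⟨i, j⟩, k⟩
        show _ = (0 : ZMod 2)
        fin_cases k
        · rw [show ((⟨0, by omega⟩ : Fin 2)) = (0 : Fin 2) from rfl, tD2_apply0 L hL2]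
          decide
        · rw [show ((⟨1, by omega⟩ : Fin 2)) = (1 : Fin 2) from rfl, tD2_apply1 L hL2]
          decide
  refine ⟨hker, ?_⟩
  have hone : (fun _ => (1 : ZMod 2) : TP L → ZMod 2) ≠ 0 := by
    intro h
    exact one_ne_zero (congrFun h (0, 0))
  have hkereq : LinearMap.ker (tD2 L) =
      Submodule.span (ZMod 2) {(fun _ => 1 : TP L → ZMod 2)} := by
    ext c
    rw [LinearMap.mem_ker, hker c, Submodule.mem_span_singleton]
    constructor
    · rintro (rfl | rfl)
      · exact ⟨0, by funext p; simp⟩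
      · exact ⟨1, by funext p; simp⟩
    · rintro ⟨a, rfl⟩
      have htwo : ∀ b : ZMod 2, b = 0 ∨ b = 1 := by decide
      rcases htwo a with rfl | rfl
      · exact Or.inl (by funext p; simp)
      · exact Or.inr (by funext p; simp)
  have hrk := LinearMap.finrank_range_add_finrank_ker (tD2 L)
  rw [hkereq, finrank_span_singleton hone] at hrk
  have hdom : Module.finrank (ZMod 2) (TP L → ZMod 2) = L ^ 2 := by
    rw [Module.finrank_pi]
    simp [Fintype.card_prod, ZMod.card, sq]
  rw [hdom] at hrk
  omega
end

section
/- For L ≥ 3, every vector z ∈ F₂^{E_L} with ∂₁ z = 0 and z ∉ im ∂₂ has Hamming weight at least L, and there exists such a vector of Hamming weight exactly L (e.g., the indicator of a horizontal noncontractible cycle). That is, the minimum distance of the toric code equals L. -/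
section ToricAux

variable {L : ℕ} [NeZero L]

private lemma tsum_zmod (g : ZMod L → ZMod 2) :
    ∑ j : ZMod L, g j = ∑ b ∈ Finset.range L, g (b : ZMod L) :=
  Finset.sum_bij' (fun (j : ZMod L) (_ : j ∈ Finset.univ) => j.val)
    (fun b _ => (b : ZMod L)) (fun j _ => Finset.mem_range.2 (ZMod.val_lt j))
    (fun _ _ => Finset.mem_univ _)
    (fun j _ => ZMod.natCast_zmod_val j)
    (fun b hb => ZMod.val_cast_of_lt (Finset.mem_range.1 hb))
    (fun j _ => (congrArg g (ZMod.natCast_zmod_val j)).symm)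

private lemma tone_ne_zero (hL : 3 ≤ L) : (1 : ZMod L) ≠ 0 := by
  haveI : Fact (1 < L) := ⟨by omega⟩
  exact one_ne_zero

private lemma tsub_one_ne (hL : 3 ≤ L) (x : ZMod L) : x - 1 ≠ x := by
  intro h
  exact tone_ne_zero hL (by linear_combination -h)

private lemma tsum_ite2 {β : Type*} [DecidableEq β] [Fintype β] (f : β → ZMod 2) (v1 v2 : β)
    (P : β → Prop) [DecidablePred P] (hP : ∀ e, P e ↔ e = v1 ∨ e = v2) (h12 : v1 ≠ v2) :
    (∑ e : β, (if P e then 1 else 0) * f e) = f v1 + f v2 := by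
  have key : ∀ e : β, (if P e then (1:ZMod 2) else 0) * f e =
      (if e = v1 then f e else 0) + (if e = v2 then f e else 0) := by
    intro e
    by_cases h1 : e = v1 <;> by_cases h2 : e = v2 <;> simp_all [hP]
  rw [Finset.sum_congr rfl fun e _ => key e, Finset.sum_add_distrib,
    Finset.sum_ite_eq', Finset.sum_ite_eq']
  simp

private lemma tsum_ite4 {β : Type*} [DecidableEq β] [Fintype β] (f : β → ZMod 2) (v1 v2 v3 v4 : β)
    (P : β → Prop) [DecidablePred P] (hP : ∀ e, P e ↔ e = v1 ∨ e = v2 ∨ e = v3 ∨ e = v4)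
    (h12 : v1 ≠ v2) (h13 : v1 ≠ v3) (h14 : v1 ≠ v4) (h23 : v2 ≠ v3) (h24 : v2 ≠ v4)
    (h34 : v3 ≠ v4) :
    (∑ e : β, (if P e then 1 else 0) * f e) = f v1 + f v2 + f v3 + f v4 := by
  have key : ∀ e : β, (if P e then (1:ZMod 2) else 0) * f e =
      (if e = v1 then f e else 0) + (if e = v2 then f e else 0) +
      (if e = v3 then f e else 0) + (if e = v4 then f e else 0) := by
    intro e
    by_cases h1 : e = v1 <;> by_cases h2 : e = v2 <;> by_cases h3 : e = v3 <;>
      by_cases h4 : e = v4 <;> simp_all [hP]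
  rw [Finset.sum_congr rfl fun e _ => key e, Finset.sum_add_distrib, Finset.sum_add_distrib,
    Finset.sum_add_distrib, Finset.sum_ite_eq', Finset.sum_ite_eq', Finset.sum_ite_eq',
    Finset.sum_ite_eq']
  simp

private lemma td1_apply (hL : 3 ≤ L) (z : TE L → ZMod 2) (x y : ZMod L) :
    tD1 L z (x, y) = z ((x, y), 0) + z ((x - 1, y), 0) + z ((x, y), 1) + z ((x, y - 1), 1) := by
  have h10 : (1 : ZMod L) ≠ 0 := tone_ne_zero hL
  rw [tD1, Matrix.mulVecLin_apply, Matrix.mulVec, dotProduct]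
  refine tsum_ite4 z (((x,y),0)) (((x-1,y),0)) (((x,y),1)) (((x,y-1),1))
    (fun e => (x,y) = tEp1 e ∨ (x,y) = tEp2 e) ?_ ?_ ?_ ?_ ?_ ?_ ?_
  · intro e
    obtain ⟨⟨a,b⟩,k⟩ := e
    fin_cases k <;> simp [tEp1, tEp2, Prod.ext_iff, eq_comm, eq_sub_iff_add_eq]
  · simp [Prod.ext_iff]; intro h; exact absurd h (tsub_one_ne hL x).symm
  · simp [Prod.ext_iff]
  · simp [Prod.ext_iff]
  · simp [Prod.ext_iff]
  · simp [Prod.ext_iff]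
  · simp [Prod.ext_iff]; intro h; exact absurd h.symm ((tsub_one_ne hL y))

private lemma td2_apply_h (hL : 3 ≤ L) (p : TP L → ZMod 2) (i j : ZMod L) :
    tD2 L p ((i, j), 0) = p (i, j) + p (i, j - 1) := by
  rw [tD2, Matrix.mulVecLin_apply, Matrix.mulVec, dotProduct]
  refine tsum_ite2 p ((i,j)) ((i,j-1))
    (fun q => (((i,j),(0:Fin 2)) = ((q.1, q.2), (0 : Fin 2)) ∨
      ((i,j),(0:Fin 2)) = ((q.1, q.2), (1 : Fin 2)) ∨
      ((i,j),(0:Fin 2)) = ((q.1, q.2 + 1), (0 : Fin 2)) ∨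
      ((i,j),(0:Fin 2)) = ((q.1 + 1, q.2), (1 : Fin 2)))) ?_ ?_
  · intro q
    obtain ⟨a,b⟩ := q
    simp [Prod.ext_iff, eq_comm, eq_sub_iff_add_eq]
  · simp [Prod.ext_iff]; intro h; exact absurd h (tsub_one_ne hL j).symm

private lemma td2_apply_v (hL : 3 ≤ L) (p : TP L → ZMod 2) (i j : ZMod L) :
    tD2 L p ((i, j), 1) = p (i, j) + p (i - 1, j) := by
  rw [tD2, Matrix.mulVecLin_apply, Matrix.mulVec, dotProduct]
  refine tsum_ite2 p ((i,j)) ((i-1,j))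
    (fun q => (((i,j),(1:Fin 2)) = ((q.1, q.2), (0 : Fin 2)) ∨
      ((i,j),(1:Fin 2)) = ((q.1, q.2), (1 : Fin 2)) ∨
      ((i,j),(1:Fin 2)) = ((q.1, q.2 + 1), (0 : Fin 2)) ∨
      ((i,j),(1:Fin 2)) = ((q.1 + 1, q.2), (1 : Fin 2)))) ?_ ?_
  · intro q
    obtain ⟨a,b⟩ := q
    simp [Prod.ext_iff, eq_comm, eq_sub_iff_add_eq]
  · simp [Prod.ext_iff]; intro h; exact absurd h (tsub_one_ne hL i).symm

end ToricAux

section ToricAux2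

variable {L : ℕ} [NeZero L]

/-- Winding functional along vertical cuts. -/
private def tC (z : TE L → ZMod 2) (i : ZMod L) : ZMod 2 := ∑ j : ZMod L, z ((i, j), 0)

/-- Winding functional along horizontal cuts. -/
private def tDw (z : TE L → ZMod 2) (j : ZMod L) : ZMod 2 := ∑ i : ZMod L, z ((i, j), 1)

private lemma trel (hL : 3 ≤ L) {z : TE L → ZMod 2} (hz : tD1 L z = 0) (x y : ZMod L) :
    z ((x, y), 0) + z ((x - 1, y), 0) + z ((x, y), 1) + z ((x, y - 1), 1) = 0 := by
  have := congrFun hz (x, y)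
  rw [td1_apply hL] at this
  simpa using this

private lemma tC_succ (hL : 3 ≤ L) {z : TE L → ZMod 2} (hz : tD1 L z = 0) (i : ZMod L) :
    tC z (i + 1) = tC z i := by
  have h0 : ∑ j : ZMod L, (z ((i + 1, j), 0) + z ((i + 1 - 1, j), 0) + z ((i + 1, j), 1)
      + z ((i + 1, j - 1), 1)) = 0 := Finset.sum_eq_zero fun j _ => trel hL hz (i + 1) j
  have hre : ∑ j : ZMod L, z ((i + 1, j - 1), 1) = ∑ j : ZMod L, z ((i + 1, j), 1) :=
    Fintype.sum_equiv (Equiv.subRight (1 : ZMod L)) _ _ (fun j => rfl)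
  simp only [Finset.sum_add_distrib] at h0
  rw [hre] at h0
  have : tC z (i + 1) + tC z i + (∑ j : ZMod L, z ((i + 1, j), 1)
      + ∑ j : ZMod L, z ((i + 1, j), 1)) = 0 := by
    simpa [tC, add_sub_cancel_right, add_assoc] using h0
  rw [CharTwo.add_self_eq_zero, add_zero, CharTwo.add_eq_iff_eq_add] at this
  simpa using this

private lemma tDw_succ (hL : 3 ≤ L) {z : TE L → ZMod 2} (hz : tD1 L z = 0) (j : ZMod L) :
    tDw z (j + 1) = tDw z j := by
  have h0 : ∑ i : ZMod L, (z ((i, j + 1), 0) + z ((i - 1, j + 1), 0) + z ((i, j + 1), 1)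
      + z ((i, j + 1 - 1), 1)) = 0 := Finset.sum_eq_zero fun i _ => trel hL hz i (j + 1)
  have hre : ∑ i : ZMod L, z ((i - 1, j + 1), 0) = ∑ i : ZMod L, z ((i, j + 1), 0) :=
    Fintype.sum_equiv (Equiv.subRight (1 : ZMod L)) _ _ (fun i => rfl)
  simp only [Finset.sum_add_distrib] at h0
  rw [hre] at h0
  have : (∑ i : ZMod L, z ((i, j + 1), 0) + ∑ i : ZMod L, z ((i, j + 1), 0))
      + (tDw z (j + 1) + tDw z j) = 0 := by
    simpa [tDw, add_sub_cancel_right, add_assoc] using h0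
  rw [CharTwo.add_self_eq_zero, zero_add, CharTwo.add_eq_iff_eq_add] at this
  simpa using this

private lemma tC_const (hL : 3 ≤ L) {z : TE L → ZMod 2} (hz : tD1 L z = 0) (i : ZMod L) :
    tC z i = tC z 0 := by
  have key : ∀ n : ℕ, tC z (n : ZMod L) = tC z 0 := by
    intro n
    induction n with
    | zero => simp
    | succ n ih => rw [Nat.cast_succ, tC_succ hL hz, ih]
  rw [← ZMod.natCast_zmod_val i, key]

private lemma tDw_const (hL : 3 ≤ L) {z : TE L → ZMod 2} (hz : tD1 L z = 0) (j : ZMod L) :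
    tDw z j = tDw z 0 := by
  have key : ∀ n : ℕ, tDw z (n : ZMod L) = tDw z 0 := by
    intro n
    induction n with
    | zero => simp
    | succ n ih => rw [Nat.cast_succ, tDw_succ hL hz, ih]
  rw [← ZMod.natCast_zmod_val j, key]

private lemma tC_d2 (hL : 3 ≤ L) (p : TP L → ZMod 2) (i : ZMod L) :
    tC (tD2 L p) i = 0 := by
  have : tC (tD2 L p) i = ∑ j : ZMod L, (p (i, j) + p (i, j - 1)) :=
    Finset.sum_congr rfl fun j _ => td2_apply_h hL p i j
  rw [this, Finset.sum_add_distrib,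
    Fintype.sum_equiv (Equiv.subRight (1 : ZMod L)) (fun j => p (i, j - 1)) (fun j => p (i, j))
      (fun j => rfl), CharTwo.add_self_eq_zero]

end ToricAux2

section ToricAux3

variable {L : ℕ} [NeZero L]

private lemma tchar2_cancel {a b : ZMod 2} (h : a + b = 0) : a = b := by
  rw [CharTwo.add_eq_iff_eq_add] at h
  simpa using h

private lemma tval_neg_one (hL : 3 ≤ L) : (-1 : ZMod L).val = L - 1 := by
  have h1 : ((L - 1 : ℕ) : ZMod L) = -1 := by
    rw [Nat.cast_sub (by omega : 1 ≤ L), ZMod.natCast_self]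
    push_cast
    ring
  rw [← h1, ZMod.val_cast_of_lt (by omega)]

private lemma twrap (hL : 3 ≤ L) (g : ZMod L → ZMod 2) (hg : ∑ j : ZMod L, g j = 0) :
    ∑ b ∈ Finset.range (L - 1), g (((b + 1 : ℕ) : ZMod L)) = g 0 := by
  have h0 := (tsum_zmod (L := L) g).symm
  rw [hg] at h0
  have hrange : Finset.range L = Finset.range ((L - 1) + 1) :=
    congrArg Finset.range (by omega)
  rw [hrange, Finset.sum_range_succ'] at h0
  simp only [Nat.cast_zero] at h0
  exact tchar2_cancel h0

private lemma tval_sub_one (hL : 3 ≤ L) {x : ZMod L} (hx : x ≠ 0) :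
    (x - 1).val = x.val - 1 ∧ x.val = (x.val - 1) + 1 := by
  have hv : x.val ≠ 0 := fun h => hx ((ZMod.val_eq_zero x).1 h)
  have hlt : x.val < L := ZMod.val_lt x
  constructor
  · have h1 : x - 1 = ((x.val - 1 : ℕ) : ZMod L) := by
      rw [Nat.cast_sub (by omega : 1 ≤ x.val), ZMod.natCast_zmod_val]
      push_cast
      ring
    rw [h1, ZMod.val_cast_of_lt (by omega)]
  · omega

private lemma tmem_range (hL : 3 ≤ L) {z : TE L → ZMod 2} (hz : tD1 L z = 0)
    (hC : tC z 0 = 0) (hD : tDw z 0 = 0) : z ∈ LinearMap.range (tD2 L) := by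
  have hCi : ∀ i, tC z i = 0 := fun i => (tC_const hL hz i).trans hC
  set A : ZMod L → ZMod 2 :=
    fun i => ∑ a ∈ Finset.range i.val, z ((((a + 1 : ℕ) : ZMod L), 0), 1) with hA
  set B : ZMod L → ZMod L → ZMod 2 :=
    fun i j => ∑ b ∈ Finset.range j.val, z ((i, ((b + 1 : ℕ) : ZMod L)), 0) with hB
  -- horizontal step
  have HH : ∀ i j : ZMod L, B i j + B i (j - 1) = z ((i, j), 0) := by
    intro i j
    by_cases hj : j = 0
    · subst hj
      have hB0 : B 0 = fun j => B 0 j := rfl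
      have h1 : B i 0 = 0 := by simp [hB, ZMod.val_zero]
      have h2 : B i (0 - 1) = z ((i, 0), 0) := by
        have := twrap hL (fun j' => z ((i, j'), 0)) (hCi i)
        rw [zero_sub]
        simpa [hB, tval_neg_one hL] using this
      rw [h1, h2, zero_add]
    · obtain ⟨hv1, hv2⟩ := tval_sub_one hL hj
      have hstep : B i j = B i (j - 1) + z ((i, j), 0) := by
        rw [hB]
        simp only
        rw [hv2, Finset.sum_range_succ, hv1]
        congr 2
        rw [← hv2, ZMod.natCast_zmod_val]
      rw [hstep]
      have : B i (j - 1) + z ((i, j), 0) + B i (j - 1)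
          = (B i (j - 1) + B i (j - 1)) + z ((i, j), 0) := by ring
      rw [this, CharTwo.add_self_eq_zero, zero_add]
  -- vertical seam step
  have AA : ∀ i : ZMod L, A i + A (i - 1) = z ((i, 0), 1) := by
    intro i
    by_cases hi : i = 0
    · subst hi
      have h1 : A 0 = 0 := by simp [hA, ZMod.val_zero]
      have h2 : A (0 - 1) = z ((0, 0), 1) := by
        have := twrap hL (fun i' => z ((i', 0), 1)) hD
        rw [zero_sub]
        simpa [hA, tval_neg_one hL] using this
      rw [h1, h2, zero_add]
    · obtain ⟨hv1, hv2⟩ := tval_sub_one hL hi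
      have hstep : A i = A (i - 1) + z ((i, 0), 1) := by
        rw [hA]
        simp only
        rw [hv2, Finset.sum_range_succ, hv1]
        congr 3
        rw [← hv2, ZMod.natCast_zmod_val]
      rw [hstep]
      have : A (i - 1) + z ((i, 0), 1) + A (i - 1)
          = (A (i - 1) + A (i - 1)) + z ((i, 0), 1) := by ring
      rw [this, CharTwo.add_self_eq_zero, zero_add]
  -- vertical bulk step
  have BB : ∀ i j : ZMod L, B i j + B (i - 1) j = z ((i, j), 1) + z ((i, 0), 1) := by
    intro i j
    have hterm : ∀ b : ℕ, z ((i, ((b + 1 : ℕ) : ZMod L)), 0) + z ((i - 1, ((b + 1 : ℕ) : ZMod L)), 0)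
        = z ((i, ((b + 1 : ℕ) : ZMod L)), 1) - z ((i, ((b : ℕ) : ZMod L)), 1) := by
      intro b
      have h := trel hL hz i (((b + 1 : ℕ) : ZMod L))
      have hy : ((b + 1 : ℕ) : ZMod L) - 1 = ((b : ℕ) : ZMod L) := by push_cast; ring
      rw [hy] at h
      rw [show z ((i, ((b + 1 : ℕ) : ZMod L)), 1) - z ((i, ((b : ℕ) : ZMod L)), 1)
        = z ((i, ((b + 1 : ℕ) : ZMod L)), 1) + z ((i, ((b : ℕ) : ZMod L)), 1) from
        CharTwo.sub_eq_add _ _]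
      refine tchar2_cancel ?_
      linear_combination h
    calc B i j + B (i - 1) j
        = ∑ b ∈ Finset.range j.val,
            (z ((i, ((b + 1 : ℕ) : ZMod L)), 1) - z ((i, ((b : ℕ) : ZMod L)), 1)) := by
          rw [hB]
          simp only
          rw [← Finset.sum_add_distrib]
          exact Finset.sum_congr rfl fun b _ => hterm b
      _ = z ((i, ((j.val : ℕ) : ZMod L)), 1) - z ((i, ((0 : ℕ) : ZMod L)), 1) :=
          Finset.sum_range_sub (fun b => z ((i, ((b : ℕ) : ZMod L)), 1)) j.val
      _ = z ((i, j), 1) + z ((i, 0), 1) := by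
          rw [CharTwo.sub_eq_add, ZMod.natCast_zmod_val]
          norm_num
  refine ⟨fun q => A q.1 + B q.1 q.2, ?_⟩
  funext e
  obtain ⟨⟨i, j⟩, k⟩ := e
  by_cases hk : k = (0 : Fin 2)
  · subst hk
    rw [td2_apply_h hL]
    show A i + B i j + (A i + B i (j - 1)) = z ((i, j), 0)
    have hre : A i + B i j + (A i + B i (j - 1))
        = (A i + A i) + (B i j + B i (j - 1)) := by ring
    rw [hre, CharTwo.add_self_eq_zero, zero_add]
    exact HH i j
  · have hk1 : k = (1 : Fin 2) := by
      have hv : k.val ≠ 0 := fun h => hk (Fin.ext h)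
      have hlt : k.val < 2 := k.isLt
      exact Fin.ext (by omega)
    subst hk1
    rw [td2_apply_v hL]
    show A i + B i j + (A (i - 1) + B (i - 1) j) = z ((i, j), 1)
    have hre : A i + B i j + (A (i - 1) + B (i - 1) j)
        = (A i + A (i - 1)) + (B i j + B (i - 1) j) := by ring
    rw [hre, AA, BB]
    have hre2 : z ((i, 0), 1) + (z ((i, j), 1) + z ((i, 0), 1))
        = (z ((i, 0), 1) + z ((i, 0), 1)) + z ((i, j), 1) := by ring
    rw [hre2, CharTwo.add_self_eq_zero, zero_add]

end ToricAux3

/-- **Minimum distance of the toric code.**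
For `L ≥ 3`, every cycle that is not a boundary (`∂₁ z = 0`, `z ∉ im ∂₂`) has Hamming
weight at least `L`, and some such vector has Hamming weight exactly `L`; i.e. the
minimum distance of the toric code equals `L`. -/
theorem toric_minimum_distance
    (L : ℕ) [NeZero L] (hL : 3 ≤ L) :
    (∀ z : TE L → ZMod 2,
        tD1 L z = 0 → z ∉ LinearMap.range (tD2 L) → L ≤ wt z) ∧
    (∃ z : TE L → ZMod 2,
        tD1 L z = 0 ∧ z ∉ LinearMap.range (tD2 L) ∧ wt z = L) := by
  constructor
  · -- lower bound
    intro z hz hnot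
    have hCD : tC z 0 ≠ 0 ∨ tDw z 0 ≠ 0 := by
      by_contra h
      push_neg at h
      exact hnot (tmem_range hL hz h.1 h.2)
    rcases hCD with hC | hD
    · have hex : ∀ i : ZMod L, ∃ j, z ((i, j), 0) ≠ 0 := by
        intro i
        by_contra h
        push_neg at h
        exact hC ((tC_const hL hz i).symm.trans (Finset.sum_eq_zero fun j _ => h j))
      choose f hf using hex
      have hinj : Set.InjOn (fun i : ZMod L => (((i, f i), 0) : TE L)) (Finset.univ : Finset (ZMod L)) :=
        fun a _ b _ h => congrArg (fun e : TE L => e.1.1) h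
      calc L = Fintype.card (ZMod L) := (ZMod.card L).symm
        _ = Finset.univ.card := Finset.card_univ.symm
        _ ≤ (Finset.univ.filter fun e => z e ≠ 0).card :=
            Finset.card_le_card_of_injOn _
              (fun i _ => Finset.mem_filter.2 ⟨Finset.mem_univ _, hf i⟩) hinj
        _ = wt z := rfl
    · have hex : ∀ j : ZMod L, ∃ i, z ((i, j), 1) ≠ 0 := by
        intro j
        by_contra h
        push_neg at h
        exact hD ((tDw_const hL hz j).symm.trans (Finset.sum_eq_zero fun i _ => h i))
      choose f hf using hex
      have hinj : Set.InjOn (fun j : ZMod L => (((f j, j), 1) : TE L)) (Finset.univ : Finset (ZMod L)) :=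
        fun a _ b _ h => congrArg (fun e : TE L => e.1.2) h
      calc L = Fintype.card (ZMod L) := (ZMod.card L).symm
        _ = Finset.univ.card := Finset.card_univ.symm
        _ ≤ (Finset.univ.filter fun e => z e ≠ 0).card :=
            Finset.card_le_card_of_injOn _
              (fun j _ => Finset.mem_filter.2 ⟨Finset.mem_univ _, hf j⟩) hinj
        _ = wt z := rfl
  · -- existence of a weight-L representative
    set z0 : TE L → ZMod 2 := fun e => if e.2 = (0 : Fin 2) ∧ e.1.2 = 0 then 1 else 0 with hz0
    refine ⟨z0, ?_, ?_, ?_⟩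
    · funext v
      obtain ⟨x, y⟩ := v
      rw [Pi.zero_apply, td1_apply hL]
      by_cases hy : y = 0 <;> simp [hz0, hy] <;> decide
    · intro hmem
      obtain ⟨p, hp⟩ := hmem
      have h1 : tC z0 0 = 0 := by rw [← hp]; exact tC_d2 hL p 0
      have h2 : tC z0 0 = 1 := by
        rw [tC]
        have key : ∀ j : ZMod L, z0 ((0, j), 0) = if j = (0 : ZMod L) then 1 else 0 := by
          intro j; simp [hz0]
        rw [Finset.sum_congr rfl fun j _ => key j, Finset.sum_ite_eq']
        simp
      rw [h1] at h2
      exact zero_ne_one h2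
    · have hset : (Finset.univ.filter fun e => z0 e ≠ 0)
          = Finset.univ.image (fun i : ZMod L => (((i, 0), 0) : TE L)) := by
        ext e
        obtain ⟨⟨a, b⟩, k⟩ := e
        simp only [Finset.mem_filter, Finset.mem_univ, true_and, Finset.mem_image, hz0]
        constructor
        · intro h
          have hc : k = (0 : Fin 2) ∧ b = 0 := by
            by_contra hc
            simp [hc] at h
          exact ⟨a, by rw [hc.1, hc.2]⟩
        · rintro ⟨i, hi⟩
          have hb : b = 0 := (congrArg (fun e : TE L => e.1.2) hi).symm
          have hk : k = (0 : Fin 2) := (congrArg (fun e : TE L => e.2) hi).symm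
          simp [hb, hk]
      rw [wt, hset,
        Finset.card_image_of_injective _ (fun a b h => congrArg (fun e : TE L => e.1.1) h),
        Finset.card_univ, ZMod.card]
end
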